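/- arXiv:0806.1273 — 11 statements merged into one kernel-verified Lean document; each statement's English description precedes it below -/
import Mathlib

section
/- For every positive integer n, n·p(n) = Σ_{h=1}^{n} σ(h)·p(n−h), where p is the partition function and σ(h) is the sum of the divisors of h. -/
open Finset

namespace PartitionSigmaAux

open Multiset

/-- Adding `k` copies of `j` gives an equivalence between partitions of `n - j*k` and
partitions of `n` with at least `k` copies of `j`. -/
def addReplicateEquiv (n j k : ℕ) (hj : 0 < j) (hjk : j * k ≤ n) :
    Nat.Partition (n - j * k) ≃ {p : Nat.Partition n // k ≤ p.parts.count j} where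
  toFun μ :=
    ⟨{ parts := μ.parts + Multiset.replicate k j
       parts_pos := by
         intro i hi
         rcases Multiset.mem_add.mp hi with h | h
         · exact μ.parts_pos h
         · rw [Multiset.eq_of_mem_replicate h]; exact hj
       parts_sum := by
         rw [Multiset.sum_add, μ.parts_sum, Multiset.sum_replicate, smul_eq_mul]
         rw [mul_comm k j]
         omega },
     by simp [Multiset.count_add, Multiset.count_replicate_self]⟩
  invFun p :=
    { parts := p.1.parts - Multiset.replicate k j
      parts_pos := fun hi =>
        p.1.parts_pos (Multiset.mem_of_le (tsub_le_self) hi)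
      parts_sum := by
        have hle : Multiset.replicate k j ≤ p.1.parts :=
          Multiset.le_count_iff_replicate_le.mp p.2
        have h1 : p.1.parts - Multiset.replicate k j + Multiset.replicate k j = p.1.parts :=
          tsub_add_cancel_of_le hle
        have h2 := congrArg Multiset.sum h1
        rw [Multiset.sum_add, Multiset.sum_replicate, smul_eq_mul, p.1.parts_sum] at h2
        have : k * j = j * k := mul_comm k j
        omega }
  left_inv μ := by
    ext1
    simp only [add_tsub_cancel_right]
  right_inv p := by
    ext1
    ext1
    simp only
    exact tsub_add_cancel_of_le (Multiset.le_count_iff_replicate_le.mp p.2)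

lemma count_mul_le (n j : ℕ) (p : Nat.Partition n) : j * p.parts.count j ≤ n := by
  have hle : Multiset.replicate (p.parts.count j) j ≤ p.parts :=
    Multiset.le_count_iff_replicate_le.mp le_rfl
  obtain ⟨u, hu⟩ := Multiset.le_iff_exists_add.mp hle
  have h2 := congrArg Multiset.sum hu
  rw [Multiset.sum_add, Multiset.sum_replicate, smul_eq_mul, p.parts_sum] at h2
  have : count j p.parts * j = j * count j p.parts := mul_comm _ _
  omega

lemma card_filter_count (n j k : ℕ) (hj : 0 < j) (hk : 0 < k) :
    ((Finset.univ : Finset (Nat.Partition n)).filter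
        (fun p => k ≤ p.parts.count j)).card =
      if j * k ≤ n then Fintype.card (Nat.Partition (n - j * k)) else 0 := by
  split_ifs with h
  · rw [← Fintype.card_subtype, Fintype.card_congr (addReplicateEquiv n j k hj h)]
  · rw [Finset.card_eq_zero, Finset.filter_eq_empty_iff]
    intro p _
    intro hcount
    have h1 := count_mul_le n j p
    have h2 : j * k ≤ j * p.parts.count j := Nat.mul_le_mul_left j hcount
    omega

lemma parts_sum_eq (n : ℕ) (p : Nat.Partition n) :
    n = ∑ j ∈ Finset.Icc 1 n, j * p.parts.count j := by
  have hsub : p.parts.toFinset ⊆ Finset.Icc 1 n := by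
    intro j hj
    rw [Multiset.mem_toFinset] at hj
    rw [Finset.mem_Icc]
    refine ⟨p.parts_pos hj, ?_⟩
    have := Multiset.single_le_sum (fun x _ => Nat.zero_le x) j hj
    rw [p.parts_sum] at this
    exact this
  rw [← Finset.sum_subset hsub (fun x _ hx => by
      rw [Multiset.count_eq_zero_of_notMem (by simpa using hx), mul_zero])]
  have h0 : p.parts.sum = ∑ m ∈ p.parts.toFinset, p.parts.count m * m := by
    have h1 := Finset.sum_multiset_map_count p.parts (id : ℕ → ℕ)
    simpa [smul_eq_mul] using h1
  conv_lhs => rw [← p.parts_sum, h0]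
  exact Finset.sum_congr rfl fun x _ => mul_comm _ _

end PartitionSigmaAux

open PartitionSigmaAux

theorem partition_sigma_recurrence (n : ℕ) (hn : 0 < n) :
    n * Fintype.card (Nat.Partition n) =
      ∑ h ∈ Finset.Icc 1 n, (∑ d ∈ h.divisors, d) * Fintype.card (Nat.Partition (n - h)) := by
  classical
  -- LHS as double sum
  have lhs_eq : n * Fintype.card (Nat.Partition n) =
      ∑ j ∈ Finset.Icc 1 n, ∑ k ∈ Finset.Icc 1 n,
        j * (if j * k ≤ n then Fintype.card (Nat.Partition (n - j * k)) else 0) := by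
    calc n * Fintype.card (Nat.Partition n)
        = ∑ p : Nat.Partition n, n := by
          rw [Finset.sum_const, smul_eq_mul, mul_comm, Finset.card_univ]
      _ = ∑ p : Nat.Partition n, ∑ j ∈ Finset.Icc 1 n, j * p.parts.count j := by
          exact Finset.sum_congr rfl fun p _ => parts_sum_eq n p
      _ = ∑ j ∈ Finset.Icc 1 n, ∑ p : Nat.Partition n, j * p.parts.count j :=
          Finset.sum_comm
      _ = ∑ j ∈ Finset.Icc 1 n, ∑ k ∈ Finset.Icc 1 n,
            j * (if j * k ≤ n then Fintype.card (Nat.Partition (n - j * k)) else 0) := by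
          refine Finset.sum_congr rfl fun j hj => ?_
          rw [Finset.mem_Icc] at hj
          have hj1 : 0 < j := hj.1
          have key : ∀ p : Nat.Partition n,
              p.parts.count j = ∑ k ∈ Finset.Icc 1 n, if k ≤ p.parts.count j then 1 else 0 := by
            intro p
            rw [← Finset.sum_filter]
            simp only [Finset.sum_const, smul_eq_mul, mul_one]
            have hle : p.parts.count j ≤ n := by
              have := count_mul_le n j p
              nlinarith
            have : (Finset.Icc 1 n).filter (fun k => k ≤ p.parts.count j)
                = Finset.Icc 1 (p.parts.count j) := by
              ext x
              simp only [Finset.mem_filter, Finset.mem_Icc]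
              omega
            rw [this, Nat.card_Icc]
            omega
          calc ∑ p : Nat.Partition n, j * p.parts.count j
              = ∑ p : Nat.Partition n, ∑ k ∈ Finset.Icc 1 n,
                  j * (if k ≤ p.parts.count j then 1 else 0) := by
                refine Finset.sum_congr rfl fun p _ => ?_
                rw [← Finset.mul_sum, ← key p]
            _ = ∑ k ∈ Finset.Icc 1 n, ∑ p : Nat.Partition n,
                  j * (if k ≤ p.parts.count j then 1 else 0) := Finset.sum_comm
            _ = ∑ k ∈ Finset.Icc 1 n,
                  j * (if j * k ≤ n then Fintype.card (Nat.Partition (n - j * k)) else 0) := by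
                refine Finset.sum_congr rfl fun k hk => ?_
                rw [Finset.mem_Icc] at hk
                rw [← Finset.mul_sum]
                congr 1
                rw [← card_filter_count n j k hj1 hk.1]
                rw [← Finset.sum_filter]
                simp
  rw [lhs_eq]
  have rhs_eq : ∀ h ∈ Finset.Icc 1 n,
      (∑ d ∈ h.divisors, d) * Fintype.card (Nat.Partition (n - h)) =
      ∑ p ∈ h.divisorsAntidiagonal,
        p.1 * (if p.1 * p.2 ≤ n then Fintype.card (Nat.Partition (n - p.1 * p.2)) else 0) := by
    intro h hh
    rw [Finset.mem_Icc] at hh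
    have hs : ∀ p ∈ h.divisorsAntidiagonal,
        p.1 * (if p.1 * p.2 ≤ n then Fintype.card (Nat.Partition (n - p.1 * p.2)) else 0)
          = p.1 * Fintype.card (Nat.Partition (n - h)) := by
      intro p hp
      have hp1 := (Nat.mem_divisorsAntidiagonal.mp hp).1
      rw [hp1, if_pos hh.2]
    rw [Finset.sum_congr rfl hs, ← Finset.sum_mul]
    congr 1
    rw [Nat.sum_divisorsAntidiagonal (fun i _ => i)]
  rw [Finset.sum_congr rfl rhs_eq]
  have hdisj : (↑(Finset.Icc 1 n) : Set ℕ).PairwiseDisjoint Nat.divisorsAntidiagonal := by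
    intro a _ b _ hab
    refine Finset.disjoint_left.mpr fun p hpa hpb => hab ?_
    exact ((Nat.mem_divisorsAntidiagonal.mp hpa).1.symm.trans
      (Nat.mem_divisorsAntidiagonal.mp hpb).1)
  rw [← Finset.sum_biUnion hdisj]
  rw [← Finset.sum_product']
  refine (Finset.sum_subset ?_ ?_).symm
  · intro p hp
    rw [Finset.mem_biUnion] at hp
    obtain ⟨h, hh, hp⟩ := hp
    rw [Finset.mem_Icc] at hh
    obtain ⟨hph, hne⟩ := Nat.mem_divisorsAntidiagonal.mp hp
    rw [Finset.mem_product, Finset.mem_Icc, Finset.mem_Icc]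
    have h1 : p.1 ≠ 0 := by intro h0; rw [h0, zero_mul] at hph; omega
    have h2 : p.2 ≠ 0 := by intro h0; rw [h0, mul_zero] at hph; omega
    subst hph
    constructor <;> constructor <;> nlinarith [Nat.one_le_iff_ne_zero.mpr h1,
      Nat.one_le_iff_ne_zero.mpr h2]
  · intro p hp hnp
    rw [Finset.mem_product, Finset.mem_Icc, Finset.mem_Icc] at hp
    have : ¬ p.1 * p.2 ≤ n := by
      intro hle
      apply hnp
      rw [Finset.mem_biUnion]
      refine ⟨p.1 * p.2, ?_, ?_⟩
      · rw [Finset.mem_Icc]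
        constructor
        · nlinarith [hp.1.1, hp.2.1]
        · exact hle
      · rw [Nat.mem_divisorsAntidiagonal]
        exact ⟨rfl, Nat.mul_ne_zero (by omega) (by omega)⟩
    rw [if_neg this, mul_zero]
end

section
/- For every positive integer n, n·p°(n) = Σ_{h=1}^{n} σ°(h)·p°(n−h), where p°(n) is the number of partitions of n into odd parts and σ°(h) is the sum of the odd divisors of h. -/
open Finset

namespace OddRecAux

/-- number of odd partitions -/
abbrev P (m : ℕ) : ℕ := (Nat.Partition.odds m).card

lemma mem_odds {m : ℕ} (p : m.Partition) :
    p ∈ Nat.Partition.odds m ↔ ∀ i ∈ p.parts, ¬Even i := by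
  simp [Nat.Partition.odds, Nat.Partition.restricted]

lemma sum_mono {s t : Multiset ℕ} (h : s ≤ t) : s.sum ≤ t.sum := by
  obtain ⟨u, rfl⟩ := Multiset.le_iff_exists_add.mp h
  simp

/-- layer cake -/
lemma layer {α : Type*} [DecidableEq α] (s : Finset α) (f : α → ℕ) (N : ℕ)
    (hf : ∀ a ∈ s, f a ≤ N) :
    ∑ a ∈ s, f a = ∑ j ∈ Finset.Icc 1 N, (s.filter (fun a => j ≤ f a)).card := by
  have h1 : ∀ a ∈ s, f a = ∑ j ∈ Finset.Icc 1 N, (if j ≤ f a then 1 else 0) := by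
    intro a ha
    rw [← Finset.sum_filter]
    have : (Finset.Icc 1 N).filter (fun j => j ≤ f a) = Finset.Icc 1 (f a) := by
      ext j
      simp only [Finset.mem_filter, Finset.mem_Icc]
      have := hf a ha
      omega
    simp [this]
  rw [Finset.sum_congr rfl h1, Finset.sum_comm]
  refine Finset.sum_congr rfl fun j _ => ?_
  rw [← Finset.sum_filter]
  simp

/-- key bijection: partitions with ≥ j parts equal to d correspond to partitions of n - j*d -/
lemma card_filter_le_count (n d j : ℕ) (hd : Odd d) :
    ((Nat.Partition.odds n).filter (fun p => j ≤ p.parts.count d)).card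
      = if j * d ≤ n then P (n - j * d) else 0 := by
  have hd0 : 0 < d := hd.pos
  split_ifs with hle
  · refine Finset.card_bij'
      (i := fun p hp => ⟨p.parts - Multiset.replicate j d, ?_, ?_⟩)
      (j := fun q hq => ⟨q.parts + Multiset.replicate j d, ?_, ?_⟩) ?_ ?_ ?_ ?_
    · -- parts_pos for i
      intro i hi
      have hsub : p.parts - Multiset.replicate j d ≤ p.parts := tsub_le_self
      exact p.parts_pos (Multiset.mem_of_le hsub hi)
    · -- parts_sum for i
      have hp' := Finset.mem_filter.mp hp
      have hrep : Multiset.replicate j d ≤ p.parts :=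
        Multiset.le_count_iff_replicate_le.mp hp'.2
      have hcancel : p.parts - Multiset.replicate j d + Multiset.replicate j d = p.parts :=
        tsub_add_cancel_of_le hrep
      have := congrArg Multiset.sum hcancel
      rw [Multiset.sum_add, Multiset.sum_replicate, smul_eq_mul, p.parts_sum] at this
      omega
    · -- parts_pos for j
      intro i hi
      rcases Multiset.mem_add.mp hi with h | h
      · exact q.parts_pos h
      · rw [Multiset.eq_of_mem_replicate h]; exact hd0
    · -- parts_sum for j
      rw [Multiset.sum_add, Multiset.sum_replicate, smul_eq_mul, q.parts_sum]
      omega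
    · -- hi : image in odds (n - j*d)
      intro p hp
      have hp' := Finset.mem_filter.mp hp
      have hodd := (mem_odds p).mp hp'.1
      rw [mem_odds]
      intro i hi
      exact hodd i (Multiset.mem_of_le tsub_le_self hi)
    · -- hj : image in filter
      intro q hq
      rw [Finset.mem_filter]
      constructor
      · rw [mem_odds]
        intro i hi
        rcases Multiset.mem_add.mp hi with h | h
        · exact (mem_odds q).mp hq i h
        · rw [Multiset.eq_of_mem_replicate h]
          exact Nat.not_even_iff_odd.mpr hd
      · simp [Multiset.count_add, Multiset.count_replicate_self]
    · -- left_inv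
      intro p hp
      have hp' := Finset.mem_filter.mp hp
      have hrep : Multiset.replicate j d ≤ p.parts :=
        Multiset.le_count_iff_replicate_le.mp hp'.2
      exact Nat.Partition.ext (tsub_add_cancel_of_le hrep)
    · -- right_inv
      intro q hq
      exact Nat.Partition.ext (by simp)
  · rw [Finset.card_eq_zero]
    rw [Finset.filter_eq_empty_iff]
    intro p hp hcount
    have hrep : Multiset.replicate j d ≤ p.parts :=
      Multiset.le_count_iff_replicate_le.mp hcount
    have := sum_mono hrep
    rw [Multiset.sum_replicate, smul_eq_mul, p.parts_sum] at this
    omega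

lemma parts_sum_eq (n : ℕ) (p : n.Partition) :
    p.parts.sum = ∑ d ∈ Finset.Icc 1 n, p.parts.count d * d := by
  have h0 : p.parts.sum = ∑ d ∈ p.parts.toFinset, p.parts.count d * d := by
    conv_lhs => rw [← Multiset.map_id' p.parts]
    rw [Finset.sum_multiset_map_count]
    simp [smul_eq_mul]
  rw [h0]
  apply Finset.sum_subset
  · intro d hd
    rw [Finset.mem_Icc]
    have h1 := p.parts_pos (Multiset.mem_toFinset.mp hd)
    have h2 : d ≤ p.parts.sum := Multiset.le_sum_of_mem (Multiset.mem_toFinset.mp hd)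
    rw [p.parts_sum] at h2
    omega
  · intro d _ hd
    rw [Multiset.count_eq_zero_of_notMem (fun h => hd (Multiset.mem_toFinset.mpr h))]
    simp

lemma count_le (n d : ℕ) (hd : 0 < d) (p : n.Partition) : p.parts.count d ≤ n := by
  have hrep : Multiset.replicate (p.parts.count d) d ≤ p.parts :=
    Multiset.le_count_iff_replicate_le.mp le_rfl
  have := sum_mono hrep
  rw [Multiset.sum_replicate, smul_eq_mul, p.parts_sum] at this
  nlinarith

end OddRecAux

open OddRecAux in
theorem odd_partition_recurrence (n : ℕ) (hn : 0 < n) :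
    n * (Nat.Partition.odds n).card =
      ∑ h ∈ Finset.Icc 1 n,
        (∑ d ∈ h.divisors.filter (fun d => Odd d), d) * (Nat.Partition.odds (n - h)).card := by
  classical
  -- the common middle expression
  set M : ℕ := ∑ d ∈ Finset.Icc 1 n, ∑ j ∈ Finset.Icc 1 n,
      (if Odd d ∧ j * d ≤ n then d * P (n - j * d) else 0) with hM
  have hLHS : n * (Nat.Partition.odds n).card = M := by
    have L1 : n * (Nat.Partition.odds n).card = ∑ p ∈ Nat.Partition.odds n, p.parts.sum := by
      rw [Finset.sum_congr rfl (fun p _ => p.parts_sum), Finset.sum_const, smul_eq_mul, mul_comm]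
    rw [L1, Finset.sum_congr rfl (fun p _ => parts_sum_eq n p), Finset.sum_comm, hM]
    refine Finset.sum_congr rfl fun d hd => ?_
    rw [Finset.mem_Icc] at hd
    by_cases hodd : Odd d
    · have hd0 : 0 < d := hodd.pos
      rw [← Finset.sum_mul,
        layer (Nat.Partition.odds n) (fun p => p.parts.count d) n
          (fun p _ => count_le n d hd0 p),
        Finset.sum_mul]
      refine Finset.sum_congr rfl fun j _ => ?_
      rw [card_filter_le_count n d j hodd]
      simp only [hodd, true_and]
      split_ifs with h
      · ring
      · simp
    · have : ∀ p ∈ Nat.Partition.odds n, p.parts.count d = 0 := by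
        intro p hp
        refine Multiset.count_eq_zero_of_notMem fun hmem => ?_
        exact ((mem_odds p).mp hp d hmem) (Nat.not_odd_iff_even.mp hodd)
      have e1 : ∑ p ∈ Nat.Partition.odds n, p.parts.count d * d = 0 :=
        Finset.sum_eq_zero fun p hp => by rw [this p hp, zero_mul]
      have e2 : (∑ j ∈ Finset.Icc 1 n,
          if Odd d ∧ j * d ≤ n then d * P (n - j * d) else 0) = 0 :=
        Finset.sum_eq_zero fun j _ => by simp [hodd]
      rw [e1, e2]
  have hRHS : (∑ h ∈ Finset.Icc 1 n,
        (∑ d ∈ h.divisors.filter (fun d => Odd d), d) * (Nat.Partition.odds (n - h)).card) = M := by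
    have step1 : ∀ h ∈ Finset.Icc 1 n,
        (∑ d ∈ h.divisors.filter (fun d => Odd d), d) * (Nat.Partition.odds (n - h)).card
          = ∑ d ∈ Finset.Icc 1 n, (if d ∣ h ∧ Odd d then d * P (n - h) else 0) := by
      intro h hh
      rw [Finset.mem_Icc] at hh
      have hdiv : h.divisors.filter (fun d => Odd d)
          = (Finset.Icc 1 n).filter (fun d => d ∣ h ∧ Odd d) := by
        ext d
        simp only [Finset.mem_filter, Nat.mem_divisors, Finset.mem_Icc]
        constructor
        · rintro ⟨⟨hdvd, hne⟩, ho⟩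
          have h1 : 0 < d := Nat.pos_of_dvd_of_pos hdvd (by omega)
          have h2 : d ≤ h := Nat.le_of_dvd (by omega) hdvd
          exact ⟨⟨h1, by omega⟩, hdvd, ho⟩
        · rintro ⟨_, hdvd, ho⟩
          exact ⟨⟨hdvd, by omega⟩, ho⟩
      rw [hdiv, Finset.sum_mul, ← Finset.sum_filter]
    rw [Finset.sum_congr rfl step1, Finset.sum_comm, hM]
    refine Finset.sum_congr rfl fun d hd => ?_
    rw [Finset.mem_Icc] at hd
    by_cases hodd : Odd d
    · have hd0 : 0 < d := hodd.pos
      rw [← Finset.sum_filter, ← Finset.sum_filter]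
      refine Finset.sum_nbij' (fun h => h / d) (fun j => j * d) ?_ ?_ ?_ ?_ ?_
      · intro h hh
        simp only [Finset.mem_filter, Finset.mem_Icc] at hh ⊢
        obtain ⟨⟨h1, h2⟩, hdvd, _⟩ := hh
        have hle : d ≤ h := Nat.le_of_dvd (by omega) hdvd
        have : h / d * d = h := Nat.div_mul_cancel hdvd
        refine ⟨⟨?_, ?_⟩, hodd, by omega⟩
        · have : 0 < h / d := Nat.div_pos hle hd0
          omega
        · calc h / d ≤ h := Nat.div_le_self h d
            _ ≤ n := h2
      · intro j hj
        simp only [Finset.mem_filter, Finset.mem_Icc] at hj ⊢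
        obtain ⟨⟨h1, _⟩, _, hle⟩ := hj
        exact ⟨⟨by nlinarith, hle⟩, ⟨j, mul_comm j d⟩, hodd⟩
      · intro h hh
        simp only [Finset.mem_filter, Finset.mem_Icc] at hh
        exact Nat.div_mul_cancel hh.2.1
      · intro j hj
        exact Nat.mul_div_cancel j hd0
      · intro h hh
        simp only [Finset.mem_filter, Finset.mem_Icc] at hh
        rw [Nat.div_mul_cancel hh.2.1]
    · have e1 : (∑ h ∈ Finset.Icc 1 n,
          if d ∣ h ∧ Odd d then d * P (n - h) else 0) = 0 :=
        Finset.sum_eq_zero fun h _ => by simp [hodd]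
      have e2 : (∑ j ∈ Finset.Icc 1 n,
          if Odd d ∧ j * d ≤ n then d * P (n - j * d) else 0) = 0 :=
        Finset.sum_eq_zero fun j _ => by simp [hodd]
      rw [e1, e2]
  rw [hLHS, hRHS]
end

section
/- Let q be a prime. For every positive integer n, n·p^{∤q}(n) = Σ_{h=1}^{n} σ^{∤q}(h)·p^{∤q}(n−h), where p^{∤q}(n) is the number of partitions of n into parts not divisible by q and σ^{∤q}(h) is the sum of divisors of h not divisible by q. -/
open Finset

def subPartition {m m' : ℕ} (c : Nat.Partition m) (t : Multiset ℕ) (ht : t ≤ c.parts)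
    (hm : m' = m - t.sum) : Nat.Partition m' where
  parts := c.parts - t
  parts_pos hi := c.parts_pos (Multiset.mem_of_le (tsub_le_self) hi)
  parts_sum := by
    have h1 : (c.parts - t) + t = c.parts := tsub_add_cancel_of_le ht
    have h2 := congrArg Multiset.sum h1
    rw [Multiset.sum_add, c.parts_sum] at h2
    omega

def addPartition {m m' : ℕ} (c : Nat.Partition m) (j k : ℕ) (hj : 0 < j)
    (hm : m' = m + j * k) : Nat.Partition m' where
  parts := Multiset.replicate k j + c.parts
  parts_pos hi := by
    rcases Multiset.mem_add.1 hi with h | h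
    · rw [Multiset.eq_of_mem_replicate h]; exact hj
    · exact c.parts_pos h
  parts_sum := by
    rw [Multiset.sum_add, Multiset.sum_replicate, smul_eq_mul, c.parts_sum]
    subst hm; ring

lemma card_count_le (q j k m : ℕ) (hj : ¬ q ∣ j) (hjk : j * k ≤ m) :
    ((Finset.univ : Finset (Nat.Partition m)).filter
      (fun c => (∀ i ∈ c.parts, ¬ q ∣ i) ∧ k ≤ c.parts.count j)).card
    = ((Finset.univ : Finset (Nat.Partition (m - j * k))).filter
        (fun c => ∀ i ∈ c.parts, ¬ q ∣ i)).card := by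
  have hj0 : 0 < j := by
    rcases Nat.eq_zero_or_pos j with h | h
    · exact absurd (h ▸ dvd_zero q) hj
    · exact h
  have hrep : (Multiset.replicate k j).sum = j * k := by
    rw [Multiset.sum_replicate, smul_eq_mul, Nat.mul_comm]
  refine Finset.card_bij'
    (fun c hc => subPartition c (Multiset.replicate k j)
      (Multiset.le_count_iff_replicate_le.1 (Finset.mem_filter.1 hc).2.2) (by omega))
    (fun c hc => addPartition c j k hj0 (by omega)) ?_ ?_ ?_ ?_
  · intro c hc
    simp only [Finset.mem_filter, Finset.mem_univ, true_and] at hc ⊢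
    intro i hi
    exact hc.1 i (Multiset.mem_of_le tsub_le_self hi)
  · intro c hc
    simp only [Finset.mem_filter, Finset.mem_univ, true_and] at hc ⊢
    constructor
    · intro i hi
      rcases Multiset.mem_add.1 hi with h | h
      · rw [Multiset.eq_of_mem_replicate h]; exact hj
      · exact hc i h
    · show k ≤ Multiset.count j (Multiset.replicate k j + c.parts)
      rw [Multiset.count_add, Multiset.count_replicate_self]
      omega
  · intro c hc
    ext1
    show Multiset.replicate k j + (c.parts - Multiset.replicate k j) = c.parts
    exact add_tsub_cancel_of_le
      (Multiset.le_count_iff_replicate_le.1 (Finset.mem_filter.1 hc).2.2)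
  · intro c hc
    ext1
    show (Multiset.replicate k j + c.parts) - Multiset.replicate k j = c.parts
    exact add_tsub_cancel_left _ _

lemma card_zero_dvd (q j k m : ℕ) (hqj : q ∣ j) (hk : 0 < k) :
    ((Finset.univ : Finset (Nat.Partition m)).filter
      (fun c => (∀ i ∈ c.parts, ¬ q ∣ i) ∧ k ≤ c.parts.count j)).card = 0 := by
  rw [Finset.card_eq_zero, Finset.filter_eq_empty_iff]
  rintro c - ⟨h1, h2⟩
  exact h1 j (Multiset.count_pos.1 (lt_of_lt_of_le hk h2)) hqj

lemma count_mul_le {m : ℕ} (c : Nat.Partition m) (j : ℕ) : c.parts.count j * j ≤ m := by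
  have hrep : Multiset.replicate (c.parts.count j) j ≤ c.parts :=
    Multiset.le_count_iff_replicate_le.1 le_rfl
  have h2 := congrArg Multiset.sum (tsub_add_cancel_of_le hrep)
  rw [Multiset.sum_add, Multiset.sum_replicate, smul_eq_mul, c.parts_sum] at h2
  omega

lemma card_zero_gt (q j k m : ℕ) (h : m < j * k) :
    ((Finset.univ : Finset (Nat.Partition m)).filter
      (fun c => (∀ i ∈ c.parts, ¬ q ∣ i) ∧ k ≤ c.parts.count j)).card = 0 := by
  rw [Finset.card_eq_zero, Finset.filter_eq_empty_iff]
  rintro c - ⟨h1, h2⟩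
  have := count_mul_le c j
  have : k * j ≤ c.parts.count j * j := Nat.mul_le_mul_right j h2
  nlinarith [count_mul_le c j]

lemma sum_count_eq {n : ℕ} (c : Nat.Partition n) :
    ∑ j ∈ Finset.Icc 1 n, j * c.parts.count j = n := by
  have hsub : c.parts.toFinset ⊆ Finset.Icc 1 n := by
    intro i hi
    rw [Multiset.mem_toFinset] at hi
    exact Finset.mem_Icc.2 ⟨c.parts_pos hi, c.parts_sum ▸ Multiset.le_sum_of_mem hi⟩
  rw [← Finset.sum_subset hsub (by
    intro x _ hx
    rw [Multiset.count_eq_zero_of_notMem (fun h => hx (Multiset.mem_toFinset.2 h)), mul_zero])]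
  have := Finset.sum_multiset_map_count c.parts (id : ℕ → ℕ)
  rw [Multiset.map_id] at this
  calc ∑ x ∈ c.parts.toFinset, x * Multiset.count x c.parts
      = ∑ x ∈ c.parts.toFinset, Multiset.count x c.parts • id x :=
        Finset.sum_congr rfl fun x _ => by rw [smul_eq_mul, id, mul_comm]
    _ = c.parts.sum := this.symm
    _ = n := c.parts_sum

def pnd (q m : ℕ) : ℕ :=
  ((Finset.univ : Finset (Nat.Partition m)).filter (fun c => ∀ i ∈ c.parts, ¬ q ∣ i)).card

theorem partition_not_div_recurrence (q : ℕ) (hq : q.Prime) (n : ℕ) (hn : 0 < n) :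
    n * ((Finset.univ : Finset (Nat.Partition n)).filter
          (fun c => ∀ i ∈ c.parts, ¬ q ∣ i)).card =
      ∑ h ∈ Finset.Icc 1 n,
        (∑ d ∈ h.divisors.filter (fun d => ¬ q ∣ d), d) *
          ((Finset.univ : Finset (Nat.Partition (n - h))).filter
            (fun c => ∀ i ∈ c.parts, ¬ q ∣ i)).card := by
  show n * pnd q n = ∑ h ∈ Finset.Icc 1 n,
        (∑ d ∈ h.divisors.filter (fun d => ¬ q ∣ d), d) * pnd q (n - h)
  -- STEP 1: LHS as double sum of cards
  have key1 : n * pnd q n = ∑ j ∈ Finset.Icc 1 n, ∑ k ∈ Finset.Icc 1 n,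
      j * ((Finset.univ : Finset (Nat.Partition n)).filter
        (fun c => (∀ i ∈ c.parts, ¬ q ∣ i) ∧ k ≤ c.parts.count j)).card := by
    have hstep : ∀ j k : ℕ, j * ((Finset.univ : Finset (Nat.Partition n)).filter
        (fun c => (∀ i ∈ c.parts, ¬ q ∣ i) ∧ k ≤ c.parts.count j)).card
        = ∑ c ∈ (Finset.univ : Finset (Nat.Partition n)).filter
            (fun c => ∀ i ∈ c.parts, ¬ q ∣ i),
            (if k ≤ c.parts.count j then j else 0) := by
      intro j k
      rw [Finset.sum_ite, Finset.sum_const, Finset.sum_const_zero, add_zero,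
        Finset.filter_filter, smul_eq_mul, mul_comm]
    simp only [hstep]
    rw [Finset.sum_congr rfl (fun j (_ : j ∈ Finset.Icc 1 n) =>
      (Finset.sum_comm (s := Finset.Icc 1 n)
        (t := (Finset.univ : Finset (Nat.Partition n)).filter
          (fun c => ∀ i ∈ c.parts, ¬ q ∣ i))
        (f := fun k c => if k ≤ c.parts.count j then j else 0))), Finset.sum_comm]
    have inner : ∀ c ∈ (Finset.univ : Finset (Nat.Partition n)).filter
        (fun c => ∀ i ∈ c.parts, ¬ q ∣ i),
        ∑ j ∈ Finset.Icc 1 n, ∑ k ∈ Finset.Icc 1 n,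
          (if k ≤ c.parts.count j then j else 0) = n := by
      intro c _
      have hcnt : ∀ j ∈ Finset.Icc 1 n, c.parts.count j ≤ n := by
        intro j hj
        have h1 := count_mul_le c j
        have hj1 : 1 ≤ j := (Finset.mem_Icc.1 hj).1
        nlinarith
      calc ∑ j ∈ Finset.Icc 1 n, ∑ k ∈ Finset.Icc 1 n,
            (if k ≤ c.parts.count j then j else 0)
          = ∑ j ∈ Finset.Icc 1 n, j * c.parts.count j := by
            apply Finset.sum_congr rfl
            intro j hj
            rw [← Finset.sum_filter]
            have hfe : (Finset.Icc 1 n).filter (fun k => k ≤ c.parts.count j)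
                = Finset.Icc 1 (c.parts.count j) := by
              ext x
              simp only [Finset.mem_filter, Finset.mem_Icc]
              have := hcnt j hj
              omega
            rw [hfe, Finset.sum_const, Nat.card_Icc, smul_eq_mul]
            rw [Nat.add_sub_cancel, mul_comm]
        _ = n := sum_count_eq c
    rw [Finset.sum_congr rfl inner, Finset.sum_const, smul_eq_mul, pnd, mul_comm]
  rw [key1]
  -- STEP 2: evaluate each card
  have key2 : ∀ j ∈ Finset.Icc 1 n, ∀ k ∈ Finset.Icc 1 n,
      j * ((Finset.univ : Finset (Nat.Partition n)).filter
        (fun c => (∀ i ∈ c.parts, ¬ q ∣ i) ∧ k ≤ c.parts.count j)).card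
      = if j * k ≤ n ∧ ¬ q ∣ j then j * pnd q (n - j * k) else 0 := by
    intro j hj k hk
    by_cases hq1 : q ∣ j
    · rw [card_zero_dvd q j k n hq1 (Finset.mem_Icc.1 hk).1, if_neg (by tauto), mul_zero]
    · by_cases h2 : j * k ≤ n
      · rw [card_count_le q j k n hq1 h2, if_pos ⟨h2, hq1⟩]; rfl
      · rw [card_zero_gt q j k n (by omega), if_neg (by tauto), mul_zero]
  rw [Finset.sum_congr rfl (fun j hj => Finset.sum_congr rfl (fun k hk => key2 j hj k hk))]
  -- STEP 3: RHS via divisorsAntidiagonal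
  have key3 : ∀ h ∈ Finset.Icc 1 n,
      (∑ d ∈ h.divisors.filter (fun d => ¬ q ∣ d), d) * pnd q (n - h)
      = ∑ p ∈ Nat.divisorsAntidiagonal h,
          (if ¬ q ∣ p.1 then p.1 * pnd q (n - p.1 * p.2) else 0) := by
    intro h hh
    rw [Nat.sum_divisorsAntidiagonal
      (f := fun d k => if ¬ q ∣ d then d * pnd q (n - d * k) else 0)]
    rw [Finset.sum_filter, Finset.sum_mul]
    apply Finset.sum_congr rfl
    intro d hd
    rw [Nat.mul_div_cancel' (Nat.mem_divisors.1 hd).1, ite_mul, zero_mul]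
  rw [Finset.sum_congr rfl key3]
  -- STEP 4: antidiagonal as fiber of product
  have key4 : ∀ h ∈ Finset.Icc 1 n, Nat.divisorsAntidiagonal h
      = ((Finset.Icc 1 n) ×ˢ (Finset.Icc 1 n)).filter (fun p => p.1 * p.2 = h) := by
    intro h hh
    rw [Finset.mem_Icc] at hh
    ext p
    simp only [Nat.mem_divisorsAntidiagonal, Finset.mem_filter, Finset.mem_product,
      Finset.mem_Icc]
    constructor
    · rintro ⟨hp, hne⟩
      have h1 : p.1 ≠ 0 := by rintro h0; rw [h0, zero_mul] at hp; omega
      have h2 : p.2 ≠ 0 := by rintro h0; rw [h0, mul_zero] at hp; omega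
      have hb1 : p.1 ≤ h := hp ▸ Nat.le_mul_of_pos_right p.1 (Nat.pos_of_ne_zero h2)
      have hb2 : p.2 ≤ h := hp ▸ Nat.le_mul_of_pos_left p.2 (Nat.pos_of_ne_zero h1)
      exact ⟨⟨⟨Nat.pos_of_ne_zero h1, le_trans hb1 hh.2⟩,
        ⟨Nat.pos_of_ne_zero h2, le_trans hb2 hh.2⟩⟩, hp⟩
    · rintro ⟨-, hp⟩
      exact ⟨hp, by omega⟩
  have key34 : ∀ h ∈ Finset.Icc 1 n,
      (∑ p ∈ Nat.divisorsAntidiagonal h,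
        (if ¬ q ∣ p.1 then p.1 * pnd q (n - p.1 * p.2) else 0))
      = ∑ p ∈ ((Finset.Icc 1 n) ×ˢ (Finset.Icc 1 n)).filter (fun p => p.1 * p.2 = h),
        (if ¬ q ∣ p.1 then p.1 * pnd q (n - p.1 * p.2) else 0) := by
    intro h hh
    rw [key4 h hh]
  rw [Finset.sum_congr rfl key34]
  rw [Finset.sum_fiberwise_eq_sum_filter ((Finset.Icc 1 n) ×ˢ (Finset.Icc 1 n))
    (Finset.Icc 1 n) (fun p => p.1 * p.2)
    (fun p => if ¬ q ∣ p.1 then p.1 * pnd q (n - p.1 * p.2) else 0)]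
  -- STEP 5: identify both sides
  rw [Finset.sum_filter, ← Finset.sum_product']
  apply Finset.sum_congr rfl
  intro p hp
  rw [Finset.mem_product, Finset.mem_Icc, Finset.mem_Icc] at hp
  by_cases hle : p.1 * p.2 ≤ n
  · have hmem : p.1 * p.2 ∈ Finset.Icc 1 n := by
      rw [Finset.mem_Icc]
      constructor
      · exact Nat.one_le_iff_ne_zero.2 (Nat.mul_ne_zero (by omega) (by omega))
      · exact hle
    rw [if_pos hmem]
    by_cases hqd : q ∣ p.1
    · rw [if_neg (by tauto), if_neg (by tauto)]
    · rw [if_pos ⟨hle, hqd⟩, if_pos hqd]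
  · rw [if_neg (by tauto), if_neg (by rw [Finset.mem_Icc]; omega)]
end

section
/- Let N ≥ 1 and let S be the (N+1)×(N+1) upper-triangular Toeplitz matrix over ℚ with S_{i,j} = σ(j−i)/(j−i) for i < j and 0 otherwise, where σ is the sum-of-divisors function. Then exp(S) = Σ_{r=0}^{N} S^r/r! is the upper-triangular Toeplitz matrix T with T_{i,j} = p(j−i) for i ≤ j, where p is the partition function. -/
open Finset

private def P (n : ℕ) : ℕ := Fintype.card (Nat.Partition n)

private lemma card_part_sub (n d j : ℕ) (hd : 1 ≤ d) (hdj : d * j ≤ n) :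
    P (n - d * j) =
      (Finset.univ.filter fun l : Nat.Partition n => j ≤ Multiset.count d l.parts).card := by
  rw [P, ← Fintype.card_subtype]
  apply Fintype.card_congr
  refine
    { toFun := fun l => ⟨⟨l.parts + Multiset.replicate j d, ?_, ?_⟩, ?_⟩
      invFun := fun m => ⟨m.1.parts - Multiset.replicate j d, ?_, ?_⟩
      left_inv := ?_
      right_inv := ?_ }
  · intro i hi
    rcases Multiset.mem_add.1 hi with h | h
    · exact l.parts_pos h
    · rw [Multiset.eq_of_mem_replicate h]; omega
  · rw [Multiset.sum_add, l.parts_sum, Multiset.sum_replicate, smul_eq_mul, Nat.mul_comm j d]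
    omega
  · simp [Multiset.count_add, Multiset.count_replicate]
  · intro i hi
    exact m.1.parts_pos (Multiset.mem_of_le tsub_le_self hi)
  · have hle : Multiset.replicate j d ≤ m.1.parts :=
      Multiset.le_count_iff_replicate_le.1 m.2
    have : m.1.parts - Multiset.replicate j d + Multiset.replicate j d = m.1.parts :=
      tsub_add_cancel_of_le hle
    have hs := congrArg Multiset.sum this
    rw [Multiset.sum_add, Multiset.sum_replicate, smul_eq_mul, Nat.mul_comm j d,
      m.1.parts_sum] at hs
    omega
  · intro l
    apply Nat.Partition.ext
    simp
  · intro m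
    apply Subtype.ext
    apply Nat.Partition.ext
    simp only
    exact tsub_add_cancel_of_le (Multiset.le_count_iff_replicate_le.1 m.2)

private lemma count_le_div (n d : ℕ) (hd : 1 ≤ d) (l : Nat.Partition n) :
    Multiset.count d l.parts ≤ n / d := by
  set c := Multiset.count d l.parts with hc
  have hle : Multiset.replicate c d ≤ l.parts := Multiset.le_count_iff_replicate_le.1 le_rfl
  have : c * d ≤ n := by
    have h2 := congrArg Multiset.sum (tsub_add_cancel_of_le hle)
    rw [Multiset.sum_add, Multiset.sum_replicate, smul_eq_mul, l.parts_sum] at h2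
    omega
  exact (Nat.le_div_iff_mul_le hd).2 this

private lemma sum_j_eq (n d : ℕ) (hd : 1 ≤ d) :
    ∑ j ∈ Icc 1 (n / d), P (n - d * j)
      = ∑ l : Nat.Partition n, Multiset.count d l.parts := by
  have h1 : ∀ j ∈ Icc 1 (n / d), P (n - d * j) =
      (Finset.univ.filter fun l : Nat.Partition n => j ≤ Multiset.count d l.parts).card := by
    intro j hj
    rw [mem_Icc] at hj
    have hdj : d * j ≤ n := by
      have := (Nat.le_div_iff_mul_le hd).1 hj.2
      have h2 : j * d = d * j := Nat.mul_comm j d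
      omega
    exact card_part_sub n d j hd hdj
  rw [Finset.sum_congr rfl h1]
  simp_rw [Finset.card_filter]
  rw [Finset.sum_comm]
  refine Finset.sum_congr rfl fun l _ => ?_
  have hcle : Multiset.count d l.parts ≤ n / d := count_le_div n d hd l
  rw [← Finset.card_filter]
  have : (Icc 1 (n / d)).filter (fun j => j ≤ Multiset.count d l.parts)
      = Icc 1 (Multiset.count d l.parts) := by
    ext x; simp only [mem_filter, mem_Icc]; omega
  rw [this]
  rw [Nat.card_Icc]
  omega

private lemma sum_d_count (n : ℕ) (l : Nat.Partition n) :
    ∑ d ∈ Icc 1 n, d * Multiset.count d l.parts = n := by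
  have hsub : l.parts.toFinset ⊆ Icc 1 n := by
    intro x hx
    rw [Multiset.mem_toFinset] at hx
    rw [mem_Icc]
    exact ⟨l.parts_pos hx, by
      have := Multiset.le_sum_of_mem hx
      rw [l.parts_sum] at this
      exact this⟩
  calc ∑ d ∈ Icc 1 n, d * Multiset.count d l.parts
      = ∑ m ∈ l.parts.toFinset, Multiset.count m l.parts • m := by
        rw [← Finset.sum_subset hsub]
        · exact Finset.sum_congr rfl fun d _ => by rw [smul_eq_mul, mul_comm]
        · intro x _ hx
          rw [Multiset.mem_toFinset] at hx
          rw [Multiset.count_eq_zero_of_notMem hx, mul_zero]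
    _ = l.parts.sum := (Finset.sum_multiset_count l.parts).symm
    _ = n := l.parts_sum

private lemma reindex_sigma (n : ℕ) :
    ∑ k ∈ Icc 1 n, (∑ d ∈ k.divisors, d) * P (n - k)
      = ∑ d ∈ Icc 1 n, d * ∑ j ∈ Icc 1 (n / d), P (n - d * j) := by
  have h1 : ∀ k ∈ Icc 1 n, (∑ d ∈ k.divisors, d) * P (n - k)
      = ∑ x ∈ k.divisorsAntidiagonal, x.1 * P (n - x.1 * x.2) := by
    intro k hk
    rw [mem_Icc] at hk
    rw [Finset.sum_mul]
    rw [← Nat.sum_divisorsAntidiagonal (fun d _ => d * P (n - k))]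
    refine Finset.sum_congr rfl fun x hx => ?_
    rw [Nat.mem_divisorsAntidiagonal] at hx
    rw [hx.1]
  rw [Finset.sum_congr rfl h1]
  simp_rw [Finset.mul_sum]
  rw [Finset.sum_sigma', Finset.sum_sigma']
  refine Finset.sum_nbij' (fun x => ⟨x.2.1, x.2.2⟩) (fun y => ⟨y.1 * y.2, (y.1, y.2)⟩)
    ?_ ?_ ?_ ?_ ?_
  · rintro ⟨k, d, e⟩ hx
    simp only [Finset.mem_sigma, mem_Icc, Nat.mem_divisorsAntidiagonal] at hx ⊢
    obtain ⟨hk, hde1, hk0⟩ := hx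
    subst hde1
    have hd : 1 ≤ d := Nat.pos_of_ne_zero fun h => hk0 (by rw [h, zero_mul])
    have he : 1 ≤ e := Nat.pos_of_ne_zero fun h => hk0 (by rw [h, mul_zero])
    have hdk : d ≤ d * e := Nat.le_mul_of_pos_right d he
    have hcm : e * d = d * e := Nat.mul_comm e d
    refine ⟨⟨hd, by omega⟩, he, ?_⟩
    rw [Nat.le_div_iff_mul_le hd]
    omega
  · rintro ⟨d, j⟩ hy
    simp only [Finset.mem_sigma, mem_Icc, Nat.mem_divisorsAntidiagonal] at hy ⊢
    obtain ⟨⟨hd, hdn⟩, hj, hjd⟩ := hy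
    have hdjn : d * j ≤ n := by
      have := (Nat.le_div_iff_mul_le hd).1 hjd
      have h2 : j * d = d * j := Nat.mul_comm j d
      omega
    have hdj0 : 0 < d * j := Nat.mul_pos hd hj
    exact ⟨⟨hdj0, hdjn⟩, trivial, hdj0.ne'⟩
  · rintro ⟨k, d, e⟩ hx
    simp only [Finset.mem_sigma, mem_Icc, Nat.mem_divisorsAntidiagonal] at hx
    obtain ⟨hk, hde1, hk0⟩ := hx
    subst hde1
    rfl
  · rintro ⟨d, j⟩ _
    rfl
  · rintro ⟨k, d, e⟩ _
    rfl

private lemma partition_recurrence (n : ℕ) :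
    n * P n = ∑ k ∈ Icc 1 n, (∑ d ∈ k.divisors, d) * P (n - k) := by
  rw [reindex_sigma]
  have h1 : ∀ d ∈ Icc 1 n, d * (∑ j ∈ Icc 1 (n / d), P (n - d * j))
      = d * ∑ l : Nat.Partition n, Multiset.count d l.parts := by
    intro d hd
    rw [mem_Icc] at hd
    rw [sum_j_eq n d hd.1]
  rw [Finset.sum_congr rfl h1]
  simp_rw [Finset.mul_sum]
  rw [Finset.sum_comm]
  have h2 : ∀ l : Nat.Partition n, l ∈ (Finset.univ : Finset (Nat.Partition n)) →
      ∑ d ∈ Icc 1 n, d * Multiset.count d l.parts = n := fun l _ => sum_d_count n l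
  rw [Finset.sum_congr rfl h2]
  rw [Finset.sum_const, smul_eq_mul, mul_comm]
  rfl

open PowerSeries in
private noncomputable def psG : PowerSeries ℚ :=
  PowerSeries.mk fun k => ((∑ d ∈ k.divisors, d : ℕ) : ℚ) / k

open PowerSeries in
private noncomputable def psH : PowerSeries ℚ := X * (PowerSeries.derivative ℚ) psG

open PowerSeries

private lemma coeff_psG_zero : coeff 0 psG = 0 := by
  simp [psG]

private lemma coeff_psH (k : ℕ) :
    coeff k psH = ((∑ d ∈ k.divisors, d : ℕ) : ℚ) := by
  cases k with
  | zero =>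
    rw [psH]
    simp
  | succ m =>
    rw [psH, coeff_succ_X_mul, coeff_derivative, psG, coeff_mk]
    push_cast
    rw [div_mul_cancel₀]
    exact Nat.cast_add_one_ne_zero m

private lemma coeff_X_mul_deriv (f : PowerSeries ℚ) (n : ℕ) :
    coeff n (X * (PowerSeries.derivative ℚ) f) = (n : ℚ) * coeff n f := by
  cases n with
  | zero => simp
  | succ m =>
    rw [coeff_succ_X_mul, coeff_derivative, mul_comm]
    push_cast
    ring_nf

private lemma coeff_psG_pow_eq_zero : ∀ (r n : ℕ), n < r → coeff n (psG ^ r) = 0 := by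
  intro r
  induction r with
  | zero => intro n hn; omega
  | succ r ih =>
    intro n hn
    rw [pow_succ, coeff_mul]
    apply Finset.sum_eq_zero
    intro p hp
    rw [Finset.HasAntidiagonal.mem_antidiagonal] at hp
    rcases Nat.eq_zero_or_pos p.2 with h | h
    · rw [h, coeff_psG_zero, mul_zero]
    · rw [ih p.1 (by omega), zero_mul]

private lemma key_deriv (n r : ℕ) :
    (n : ℚ) * coeff n (psG ^ (r + 1)) = (r + 1 : ℚ) * coeff n (psH * psG ^ r) := by
  rw [← coeff_X_mul_deriv]
  have hleib := Derivation.leibniz_pow (PowerSeries.derivative ℚ) psG (r + 1)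
  rw [Nat.add_sub_cancel] at hleib
  rw [hleib]
  have : (X : PowerSeries ℚ) * ((r + 1) • psG ^ r • (PowerSeries.derivative ℚ) psG)
      = ((r + 1 : ℕ) : PowerSeries ℚ) * (psH * psG ^ r) := by
    simp only [smul_eq_mul, nsmul_eq_mul, psH]
    push_cast
    ring
  rw [this]
  rw [show ((r + 1 : ℕ) : PowerSeries ℚ) = PowerSeries.C ((r + 1 : ℕ) : ℚ) from by
    rw [map_natCast]]
  rw [PowerSeries.coeff_C_mul]
  push_cast
  ring

private lemma coeff_psH_psG_pow_high (Nn n : ℕ) (hn : n ≤ Nn) :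
    coeff n (psH * psG ^ Nn) = 0 := by
  rw [coeff_mul]
  apply Finset.sum_eq_zero
  intro p hp
  rw [Finset.HasAntidiagonal.mem_antidiagonal] at hp
  rcases Nat.eq_zero_or_pos p.1 with h | h
  · rw [h, coeff_psH, Nat.divisors_zero]
    simp
  · rw [coeff_psG_pow_eq_zero Nn p.2 (by omega), mul_zero]

private noncomputable def eseq (Nn n : ℕ) : ℚ :=
  ∑ r ∈ Finset.range (Nn + 1), (r.factorial : ℚ)⁻¹ * coeff n (psG ^ r)

private lemma eseq_zero (Nn : ℕ) : eseq Nn 0 = 1 := by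
  rw [eseq, Finset.sum_range_succ']
  have h1 : ∀ r ∈ Finset.range Nn,
      ((r + 1).factorial : ℚ)⁻¹ * coeff 0 (psG ^ (r + 1)) = 0 := by
    intro r _
    rw [coeff_psG_pow_eq_zero (r + 1) 0 (by omega), mul_zero]
  rw [Finset.sum_congr rfl h1]
  simp

private lemma eseq_rec (Nn n : ℕ) (h1 : 1 ≤ n) (hn : n ≤ Nn) :
    (n : ℚ) * eseq Nn n
      = ∑ k ∈ Finset.range (n + 1), ((∑ d ∈ k.divisors, d : ℕ) : ℚ) * eseq Nn (n - k) := by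
  rw [eseq, Finset.mul_sum]
  rw [Finset.sum_range_succ']
  have h2 : ∀ r, (n : ℚ) * ((r.factorial : ℚ)⁻¹ * coeff n (psG ^ r))
      = (r.factorial : ℚ)⁻¹ * ((n : ℚ) * coeff n (psG ^ r)) := fun r => by ring
  have hstep : ∀ r ∈ Finset.range Nn,
      (n : ℚ) * (((r + 1).factorial : ℚ)⁻¹ * coeff n (psG ^ (r + 1)))
        = (r.factorial : ℚ)⁻¹ * coeff n (psH * psG ^ r) := by
    intro r _
    rw [h2, key_deriv n r, Nat.factorial_succ]
    push_cast
    have hrf : ((r.factorial : ℚ)) ≠ 0 := Nat.cast_ne_zero.2 r.factorial_ne_zero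
    field_simp
  rw [Finset.sum_congr rfl hstep]
  have hz : (n : ℚ) * ((Nat.factorial 0 : ℚ)⁻¹ * coeff n (psG ^ 0)) = 0 := by
    rw [pow_zero, coeff_one, if_neg (by omega)]
    ring
  rw [hz, add_zero]
  have hlast : (Nn.factorial : ℚ)⁻¹ * coeff n (psH * psG ^ Nn) = 0 := by
    rw [coeff_psH_psG_pow_high Nn n hn, mul_zero]
  rw [← add_zero (∑ r ∈ Finset.range Nn, (r.factorial : ℚ)⁻¹ * coeff n (psH * psG ^ r)),
    ← hlast, ← Finset.sum_range_succ]
  have h3 : ∀ r ∈ Finset.range (Nn + 1),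
      (r.factorial : ℚ)⁻¹ * coeff n (psH * psG ^ r)
        = ∑ k ∈ Finset.range (n + 1),
            ((∑ d ∈ k.divisors, d : ℕ) : ℚ)
              * ((r.factorial : ℚ)⁻¹ * coeff (n - k) (psG ^ r)) := by
    intro r _
    rw [coeff_mul, Finset.Nat.sum_antidiagonal_eq_sum_range_succ_mk, Finset.mul_sum]
    refine Finset.sum_congr rfl fun k _ => ?_
    rw [coeff_psH]
    ring
  rw [Finset.sum_congr rfl h3, Finset.sum_comm]
  refine Finset.sum_congr rfl fun k _ => ?_
  rw [eseq, Finset.mul_sum]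

private lemma eseq_eq_P (Nn : ℕ) : ∀ n, n ≤ Nn → eseq Nn n = (P n : ℚ) := by
  intro n
  induction n using Nat.strong_induction_on with
  | _ n ih =>
    intro hn
    rcases Nat.eq_zero_or_pos n with rfl | h1
    · rw [eseq_zero]
      have : P 0 = 1 := by simp [P]
      rw [this]
      norm_num
    · have hrecP : (n : ℚ) * (P n : ℚ)
          = ∑ k ∈ Finset.range (n + 1), ((∑ d ∈ k.divisors, d : ℕ) : ℚ) * (P (n - k) : ℚ) := by
        have hcast : ((n * P n : ℕ) : ℚ)
            = ((∑ k ∈ Icc 1 n, (∑ d ∈ k.divisors, d) * P (n - k) : ℕ) : ℚ) := by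
          exact_mod_cast congrArg (fun x : ℕ => (x : ℚ)) (partition_recurrence n)
        push_cast at hcast
        rw [hcast]
        rw [Finset.range_eq_Ico, Finset.sum_eq_sum_Ico_succ_bot (by omega)]
        rw [Nat.divisors_zero]
        simp [Finset.Ico_add_one_right_eq_Icc]
      have hrecE := eseq_rec Nn n h1 hn
      have hsums : ∑ k ∈ Finset.range (n + 1), ((∑ d ∈ k.divisors, d : ℕ) : ℚ) * eseq Nn (n - k)
          = ∑ k ∈ Finset.range (n + 1), ((∑ d ∈ k.divisors, d : ℕ) : ℚ) * (P (n - k) : ℚ) := by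
        refine Finset.sum_congr rfl fun k hk => ?_
        rcases Nat.eq_zero_or_pos k with rfl | hk1
        · rw [Nat.divisors_zero]
          simp
        · rw [ih (n - k) (by omega) (by omega)]
      have hne : (n : ℚ) ≠ 0 := Nat.cast_ne_zero.2 (by omega)
      have : (n : ℚ) * eseq Nn n = (n : ℚ) * (P n : ℚ) := by
        rw [hrecE, hsums, ← hrecP]
      exact mul_left_cancel₀ hne this

private def Toep (Nn : ℕ) (f : ℕ → ℚ) : Matrix (Fin (Nn + 1)) (Fin (Nn + 1)) ℚ :=
  fun i j => if i ≤ j then f ((j : ℕ) - (i : ℕ)) else 0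

private lemma Toep_mul (Nn : ℕ) (f g : ℕ → ℚ) :
    Toep Nn f * Toep Nn g
      = Toep Nn (fun n => ∑ k ∈ Finset.range (n + 1), f k * g (n - k)) := by
  funext i j
  rw [Matrix.mul_apply]
  have hterm : ∀ m : Fin (Nn + 1),
      Toep Nn f i m * Toep Nn g m j
        = (fun m' : ℕ => (if (i : ℕ) ≤ m' then f (m' - (i : ℕ)) else 0)
            * (if m' ≤ (j : ℕ) then g ((j : ℕ) - m') else 0)) (m : ℕ) := by
    intro m
    simp only [Toep, Fin.le_def]
  rw [Finset.sum_congr rfl fun m _ => hterm m]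
  rw [Fin.sum_univ_eq_sum_range (fun m' : ℕ => (if (i : ℕ) ≤ m' then f (m' - (i : ℕ)) else 0)
    * (if m' ≤ (j : ℕ) then g ((j : ℕ) - m') else 0)) (Nn + 1)]
  by_cases hij : i ≤ j
  · rw [Fin.le_def] at hij
    have hsub : Finset.Icc (i : ℕ) (j : ℕ) ⊆ Finset.range (Nn + 1) := by
      intro x hx
      rw [Finset.mem_Icc] at hx
      rw [Finset.mem_range]
      have := j.isLt
      omega
    rw [← Finset.sum_subset hsub (by
      intro x hx hx2
      rw [Finset.mem_Icc] at hx2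
      show (if (i : ℕ) ≤ x then f (x - (i : ℕ)) else 0)
          * (if x ≤ (j : ℕ) then g ((j : ℕ) - x) else 0) = 0
      rcases Nat.lt_or_ge x (i : ℕ) with h | h
      · rw [if_neg (by omega), zero_mul]
      · rw [if_pos h, if_neg (by omega), mul_zero])]
    rw [← Finset.Ico_add_one_right_eq_Icc, Finset.sum_Ico_eq_sum_range]
    have hR : Toep Nn (fun n => ∑ k ∈ Finset.range (n + 1), f k * g (n - k)) i j
        = ∑ k ∈ Finset.range ((j : ℕ) - (i : ℕ) + 1), f k * g ((j : ℕ) - (i : ℕ) - k) := by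
      exact if_pos (Fin.le_def.2 hij)
    rw [hR]
    have hr : (j : ℕ) + 1 - (i : ℕ) = (j : ℕ) - (i : ℕ) + 1 := by omega
    rw [hr]
    refine Finset.sum_congr rfl fun k hk => ?_
    rw [Finset.mem_range] at hk
    rw [if_pos (by omega), if_pos (by omega)]
    have h1 : (i : ℕ) + k - (i : ℕ) = k := by omega
    have h2 : (j : ℕ) - ((i : ℕ) + k) = (j : ℕ) - (i : ℕ) - k := by omega
    rw [h1, h2]
  · have hR : Toep Nn (fun n => ∑ k ∈ Finset.range (n + 1), f k * g (n - k)) i j = 0 := by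
      exact if_neg hij
    rw [hR]
    rw [Fin.le_def] at hij
    apply Finset.sum_eq_zero
    intro x _
    show (if (i : ℕ) ≤ x then f (x - (i : ℕ)) else 0)
        * (if x ≤ (j : ℕ) then g ((j : ℕ) - x) else 0) = 0
    rcases Nat.lt_or_ge x (i : ℕ) with h | h
    · rw [if_neg (by omega), zero_mul]
    · rw [if_pos h, if_neg (by omega), mul_zero]

private lemma pow_toep (Nn : ℕ) (S : Matrix (Fin (Nn + 1)) (Fin (Nn + 1)) ℚ)
    (hS : S = Toep Nn fun n => coeff n psG) (r : ℕ) :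
    S ^ r = Toep Nn fun n => coeff n (psG ^ r) := by
  induction r with
  | zero =>
    rw [pow_zero]
    funext i j
    rw [Matrix.one_apply]
    show _ = if i ≤ j then coeff ((j : ℕ) - (i : ℕ)) (psG ^ 0) else 0
    rw [pow_zero, coeff_one]
    by_cases hij : i = j
    · subst hij
      rw [if_pos rfl, if_pos le_rfl, if_pos (by omega)]
    · rw [if_neg hij]
      by_cases h2 : i ≤ j
      · rw [if_pos h2, if_neg (by
          rw [Fin.le_def] at h2
          rw [Fin.ext_iff] at hij
          omega)]
      · rw [if_neg h2]
  | succ r ih =>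
    have hAB : (fun n => ∑ k ∈ Finset.range (n + 1),
          coeff k (psG ^ r) * coeff (n - k) psG)
        = fun n => coeff n (psG ^ (r + 1)) := by
      funext n
      rw [pow_succ, coeff_mul, Finset.Nat.sum_antidiagonal_eq_sum_range_succ_mk]
    rw [pow_succ, ih, hS, Toep_mul, hAB]

theorem exp_sigma_toeplitz_eq_partition (N : ℕ) (hN : 1 ≤ N)
    (S T : Matrix (Fin (N + 1)) (Fin (N + 1)) ℚ)
    (hS : ∀ i j, S i j =
      if i < j then ((∑ d ∈ ((j : ℕ) - (i : ℕ)).divisors, d : ℕ) : ℚ) / ((j : ℕ) - (i : ℕ)) else 0)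
    (hT : ∀ i j, T i j =
      if i ≤ j then (Fintype.card (Nat.Partition ((j : ℕ) - (i : ℕ))) : ℚ) else 0) :
    ∑ r ∈ Finset.range (N + 1), ((r.factorial : ℚ)⁻¹) • S ^ r = T := by
  have hSeq : S = Toep N fun n => coeff n psG := by
    funext i j
    rw [hS i j]
    show _ = if i ≤ j then coeff ((j : ℕ) - (i : ℕ)) psG else 0
    by_cases hlt : i < j
    · rw [if_pos hlt, if_pos (le_of_lt hlt), psG, coeff_mk]
      rw [Nat.cast_sub (show (i : ℕ) ≤ (j : ℕ) from by
        rw [Fin.lt_def] at hlt; omega)]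
    · rw [if_neg hlt]
      by_cases hle : i ≤ j
      · have hij : i = j := le_antisymm hle (not_lt.1 hlt)
        subst hij
        rw [if_pos le_rfl, psG, coeff_mk, Nat.sub_self]
        simp
      · rw [if_neg hle]
  funext i j
  rw [Matrix.sum_apply]
  have hterm : ∀ r ∈ Finset.range (N + 1), ((r.factorial : ℚ)⁻¹ • S ^ r) i j
      = (r.factorial : ℚ)⁻¹ * (Toep N (fun n => coeff n (psG ^ r)) i j) := by
    intro r _
    rw [pow_toep N S hSeq r, Matrix.smul_apply, smul_eq_mul]
  rw [Finset.sum_congr rfl hterm, hT i j]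
  by_cases hij : i ≤ j
  · have hTo : ∀ r : ℕ, Toep N (fun n => coeff n (psG ^ r)) i j
        = coeff ((j : ℕ) - (i : ℕ)) (psG ^ r) := fun r => if_pos hij
    rw [Finset.sum_congr rfl fun r _ => by rw [hTo r]]
    rw [if_pos hij]
    have hle : (j : ℕ) - (i : ℕ) ≤ N := by
      have := j.isLt
      omega
    have h := eseq_eq_P N ((j : ℕ) - (i : ℕ)) hle
    rw [eseq] at h
    rw [h]
    rfl
  · rw [if_neg hij]
    apply Finset.sum_eq_zero
    intro r _
    rw [show Toep N (fun n => coeff n (psG ^ r)) i j = 0 from if_neg hij, mul_zero]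
end

section
/- Let (s_n)_{n≥1} be a sequence of rationals and define t_0 = 1, t_n = (1/n)·Σ_{k=0}^{n−1} s_{n−k}·t_k for n ≥ 1. Let S be the (N+1)×(N+1) matrix with S_{i,j} = s_{j−i}/(j−i) for i < j and 0 otherwise. Then exp(S) is upper triangular with (exp S)_{i,j} = t_{j−i} for all i ≤ j. -/
open Finset

/-- diagonal entries of powers of the Toeplitz matrix -/
def expAuxF (s : ℕ → ℚ) : ℕ → ℕ → ℚ
  | 0, d => if d = 0 then 1 else 0
  | r+1, d => ∑ m ∈ Finset.Icc 1 d, (s m / (m : ℚ)) * expAuxF s r (d - m)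

lemma expAuxF_eq_zero (s : ℕ → ℚ) : ∀ (r d : ℕ), d < r → expAuxF s r d = 0 := by
  intro r
  induction r with
  | zero => omega
  | succ r ih =>
    intro d hd
    rw [expAuxF]
    apply Finset.sum_eq_zero
    intro m hm
    simp only [Finset.mem_Icc] at hm
    rw [ih (d - m) (by omega), mul_zero]

lemma expAuxF_deriv (s : ℕ → ℚ) : ∀ (r d : ℕ), (d : ℚ) * expAuxF s (r+1) d
    = (r + 1 : ℚ) * ∑ m ∈ Finset.Icc 1 d, s m * expAuxF s r (d - m) := by
  intro r
  induction r with
  | zero =>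
    intro d
    rcases Nat.eq_zero_or_pos d with h | h
    · subst h; simp [expAuxF]
    have h1 : ∑ m ∈ Finset.Icc 1 d, (s m / (m : ℚ)) * expAuxF s 0 (d - m)
        = s d / (d : ℚ) := by
      rw [Finset.sum_eq_single_of_mem d (by simp [Finset.mem_Icc]; omega)]
      · simp [expAuxF]
      · intro m hm hne
        simp only [Finset.mem_Icc] at hm
        have : d - m ≠ 0 := by omega
        simp [expAuxF, this]
    have h2 : ∑ m ∈ Finset.Icc 1 d, s m * expAuxF s 0 (d - m) = s d := by
      rw [Finset.sum_eq_single_of_mem d (by simp [Finset.mem_Icc]; omega)]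
      · simp [expAuxF]
      · intro m hm hne
        simp only [Finset.mem_Icc] at hm
        have : d - m ≠ 0 := by omega
        simp [expAuxF, this]
    rw [show expAuxF s 1 = expAuxF s (0+1) from rfl, expAuxF, h1, h2]
    have hd : (d : ℚ) ≠ 0 := Nat.cast_ne_zero.mpr (by omega)
    field_simp
    simp
  | succ r ih =>
    intro d
    rw [show expAuxF s (r+2) d = ∑ m ∈ Finset.Icc 1 d, (s m / (m : ℚ)) * expAuxF s (r+1) (d - m) from rfl]
    rw [Finset.mul_sum]
    have key : ∀ m ∈ Finset.Icc 1 d,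
        (d : ℚ) * ((s m / (m : ℚ)) * expAuxF s (r+1) (d - m))
        = s m * expAuxF s (r+1) (d - m)
          + (r + 1 : ℚ) * ∑ m' ∈ Finset.Icc 1 (d - m), (s m / (m : ℚ)) * (s m' * expAuxF s r (d - m - m')) := by
      intro m hm
      simp only [Finset.mem_Icc] at hm
      have hm0 : (m : ℚ) ≠ 0 := by
        have : m ≠ 0 := by omega
        exact_mod_cast this
      have hcast : (d : ℚ) = (m : ℚ) + ((d - m : ℕ) : ℚ) := by
        have : d = m + (d - m) := by omega
        exact_mod_cast this
      rw [hcast, add_mul]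
      congr 1
      · field_simp
      · rw [mul_comm ((d - m : ℕ) : ℚ), mul_assoc, mul_comm (expAuxF s (r+1) (d-m)),
          ih (d - m), Finset.mul_sum, Finset.mul_sum, Finset.mul_sum]
        ring_nf
    have swap : ∑ m ∈ Finset.Icc 1 d, ∑ m' ∈ Finset.Icc 1 (d - m),
          (s m / (m : ℚ)) * (s m' * expAuxF s r (d - m - m'))
        = ∑ m' ∈ Finset.Icc 1 d, ∑ m ∈ Finset.Icc 1 (d - m'),
          (s m / (m : ℚ)) * (s m' * expAuxF s r (d - m - m')) := by
      apply Finset.sum_comm'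
      intro x y
      simp only [Finset.mem_Icc]
      omega
    have inner : ∀ m' ∈ Finset.Icc 1 d,
        ∑ m ∈ Finset.Icc 1 (d - m'), (s m / (m : ℚ)) * (s m' * expAuxF s r (d - m - m'))
        = s m' * expAuxF s (r+1) (d - m') := by
      intro m' hm'
      rw [expAuxF, Finset.mul_sum]
      apply Finset.sum_congr rfl
      intro m _
      have : d - m - m' = d - m' - m := by omega
      rw [this]; ring
    rw [Finset.sum_congr rfl key, Finset.sum_add_distrib, ← Finset.mul_sum, swap,
      Finset.sum_congr rfl inner]
    push_cast
    ring

lemma expAux_pow_entry (N : ℕ) (s : ℕ → ℚ) (S : Matrix (Fin (N + 1)) (Fin (N + 1)) ℚ)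
    (hS : ∀ i j, S i j =
      if i < j then s ((j : ℕ) - (i : ℕ)) / (((j : ℕ) - (i : ℕ) : ℕ) : ℚ) else 0) :
    ∀ (r : ℕ) (i j : Fin (N + 1)),
      (S ^ r) i j = if (i : ℕ) ≤ (j : ℕ) then expAuxF s r ((j : ℕ) - (i : ℕ)) else 0 := by
  intro r
  induction r with
  | zero =>
    intro i j
    rw [pow_zero, Matrix.one_apply]
    by_cases h : (i : ℕ) ≤ (j : ℕ)
    · rw [if_pos h]
      by_cases h2 : i = j
      · subst h2; simp [expAuxF]
      · have hne : (i : ℕ) ≠ (j : ℕ) := fun hh => h2 (Fin.ext hh)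
        have : (j : ℕ) - (i : ℕ) ≠ 0 := by omega
        simp [expAuxF, h2, this]
    · rw [if_neg h, if_neg (by rintro rfl; exact h le_rfl)]
  | succ r ih =>
    intro i j
    rw [pow_succ', Matrix.mul_apply]
    have hterm : ∀ k : Fin (N + 1), S i k * (S ^ r) k j
        = if (i : ℕ) < (k : ℕ) ∧ (k : ℕ) ≤ (j : ℕ) then
            s ((k : ℕ) - (i : ℕ)) / (((k : ℕ) - (i : ℕ) : ℕ) : ℚ) * expAuxF s r ((j : ℕ) - (k : ℕ)) else 0 := by
      intro k
      rw [hS, ih]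
      by_cases h1 : i < k
      · by_cases h2 : (k : ℕ) ≤ (j : ℕ)
        · rw [if_pos h1, if_pos h2, if_pos ⟨Fin.lt_def.mp h1, h2⟩]
        · rw [if_pos h1, if_neg h2, if_neg (by tauto), mul_zero]
      · rw [if_neg h1, zero_mul, if_neg (by
          intro hc
          exact h1 (Fin.lt_def.mpr hc.1))]
    rw [Finset.sum_congr rfl fun k _ => hterm k,
      Fin.sum_univ_eq_sum_range (fun k : ℕ => if (i : ℕ) < k ∧ k ≤ (j : ℕ) then
        s (k - (i : ℕ)) / ((k - (i : ℕ) : ℕ) : ℚ) * expAuxF s r ((j : ℕ) - k) else 0) (N + 1)]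
    by_cases hij : (i : ℕ) ≤ (j : ℕ)
    · rw [if_pos hij]
      have hsub : Finset.Ioc (i : ℕ) (j : ℕ) ⊆ Finset.range (N + 1) := by
        intro k hk
        simp only [Finset.mem_Ioc] at hk
        simp only [Finset.mem_range]
        exact lt_of_le_of_lt hk.2 j.isLt
      have : ∀ k ∈ Finset.range (N + 1),
          (if (i : ℕ) < k ∧ k ≤ (j : ℕ) then
            s (k - (i : ℕ)) / ((k - (i : ℕ) : ℕ) : ℚ) * expAuxF s r ((j : ℕ) - k) else 0)
          = if k ∈ Finset.Ioc (i : ℕ) (j : ℕ) then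
            s (k - (i : ℕ)) / ((k - (i : ℕ) : ℕ) : ℚ) * expAuxF s r ((j : ℕ) - k) else 0 := by
        intro k _
        simp [Finset.mem_Ioc]
      rw [Finset.sum_congr rfl this, Finset.sum_ite_mem,
        Finset.inter_eq_right.mpr hsub, expAuxF]
      refine Finset.sum_nbij' (fun k => k - (i : ℕ)) (fun m => m + (i : ℕ)) ?_ ?_ ?_ ?_ ?_
      · intro k hk; simp only [Finset.mem_Ioc] at hk; simp only [Finset.mem_Icc]; omega
      · intro m hm; simp only [Finset.mem_Icc] at hm; simp only [Finset.mem_Ioc]; omega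
      · intro k hk; simp only [Finset.mem_Ioc] at hk; show k - (i:ℕ) + (i:ℕ) = k; omega
      · intro m hm; simp only [Finset.mem_Icc] at hm; show m + (i:ℕ) - (i:ℕ) = m; omega
      · intro k hk
        simp only [Finset.mem_Ioc] at hk
        have h1 : (j : ℕ) - k = (j : ℕ) - (i : ℕ) - (k - (i : ℕ)) := by omega
        rw [h1]
    · rw [if_neg hij]
      apply Finset.sum_eq_zero
      intro k _
      rw [if_neg (by omega)]

def expAuxU (N : ℕ) (s : ℕ → ℚ) (d : ℕ) : ℚ :=
  ∑ r ∈ Finset.range (N + 1), ((r.factorial : ℚ)⁻¹) * expAuxF s r d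

lemma expAuxU_zero (N : ℕ) (s : ℕ → ℚ) : expAuxU N s 0 = 1 := by
  rw [expAuxU, Finset.sum_range_succ']
  simp [expAuxF]

lemma expAuxU_rec (N : ℕ) (s : ℕ → ℚ) (d : ℕ) (h1 : 1 ≤ d) (h2 : d ≤ N) :
    (d : ℚ) * expAuxU N s d = ∑ k ∈ Finset.range d, s (d - k) * expAuxU N s k := by
  rw [expAuxU, Finset.mul_sum, Finset.sum_range_succ']
  have hlast : (d : ℚ) * (((Nat.factorial 0 : ℕ) : ℚ)⁻¹ * expAuxF s 0 d) = 0 := by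
    have : d ≠ 0 := by omega
    simp [expAuxF, this]
  rw [hlast, add_zero]
  have hterm : ∀ r ∈ Finset.range N,
      (d : ℚ) * (((Nat.factorial (r + 1) : ℕ) : ℚ)⁻¹ * expAuxF s (r + 1) d)
      = ∑ m ∈ Finset.Icc 1 d, ((Nat.factorial r : ℕ) : ℚ)⁻¹ * (s m * expAuxF s r (d - m)) := by
    intro r _
    rw [← mul_assoc, mul_comm (d : ℚ), mul_assoc, expAuxF_deriv, Nat.factorial_succ]
    push_cast
    rw [← mul_assoc, ← Finset.mul_sum]
    congr 1
    have hr : ((r : ℚ) + 1) ≠ 0 := by positivity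
    have hf : ((Nat.factorial r : ℕ) : ℚ) ≠ 0 := Nat.cast_ne_zero.mpr r.factorial_ne_zero
    field_simp
  rw [Finset.sum_congr rfl hterm, Finset.sum_comm]
  have hinner : ∀ m ∈ Finset.Icc 1 d,
      ∑ r ∈ Finset.range N, ((Nat.factorial r : ℕ) : ℚ)⁻¹ * (s m * expAuxF s r (d - m))
      = s m * expAuxU N s (d - m) := by
    intro m hm
    simp only [Finset.mem_Icc] at hm
    rw [expAuxU, Finset.mul_sum, Finset.sum_range_succ,
      expAuxF_eq_zero s N (d - m) (by omega), mul_zero, mul_zero, add_zero]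
    apply Finset.sum_congr rfl
    intro r _
    ring
  rw [Finset.sum_congr rfl hinner]
  refine Finset.sum_nbij' (fun m => d - m) (fun k => d - k) ?_ ?_ ?_ ?_ ?_
  · intro m hm; simp only [Finset.mem_Icc] at hm; simp only [Finset.mem_range]; omega
  · intro k hk; simp only [Finset.mem_range] at hk; simp only [Finset.mem_Icc]; omega
  · intro m hm; simp only [Finset.mem_Icc] at hm; show d - (d - m) = m; omega
  · intro k hk; simp only [Finset.mem_range] at hk; show d - (d - k) = k; omega
  · intro m hm
    simp only [Finset.mem_Icc] at hm
    have : d - (d - m) = m := by omega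
    rw [this]

theorem exp_toeplitz_eq_recurrence_seq (N : ℕ) (s t : ℕ → ℚ)
    (ht0 : t 0 = 1)
    (htrec : ∀ n : ℕ, 1 ≤ n → t n = (1 / (n : ℚ)) * ∑ k ∈ Finset.range n, s (n - k) * t k)
    (S : Matrix (Fin (N + 1)) (Fin (N + 1)) ℚ)
    (hS : ∀ i j, S i j =
      if i < j then s ((j : ℕ) - (i : ℕ)) / (((j : ℕ) - (i : ℕ) : ℕ) : ℚ) else 0) :
    (∀ i j : Fin (N + 1), j < i →
        (∑ r ∈ Finset.range (N + 1), ((r.factorial : ℚ)⁻¹) • S ^ r) i j = 0) ∧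
    (∀ i j : Fin (N + 1), i ≤ j →
        (∑ r ∈ Finset.range (N + 1), ((r.factorial : ℚ)⁻¹) • S ^ r) i j = t ((j : ℕ) - (i : ℕ))) := by
  have hE : ∀ i j : Fin (N + 1),
      (∑ r ∈ Finset.range (N + 1), ((r.factorial : ℚ)⁻¹) • S ^ r) i j
      = ∑ r ∈ Finset.range (N + 1), ((r.factorial : ℚ)⁻¹) * ((S ^ r) i j) := by
    intro i j
    rw [Matrix.sum_apply]
    exact Finset.sum_congr rfl fun r _ => by rw [Matrix.smul_apply, smul_eq_mul]
  have hpow := expAux_pow_entry N s S hS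
  have hfinal : ∀ d : ℕ, d ≤ N → expAuxU N s d = t d := by
    intro d
    induction d using Nat.strong_induction_on with
    | _ d ih =>
      intro hd
      rcases Nat.eq_zero_or_pos d with h | h
      · subst h; rw [expAuxU_zero, ht0]
      have hd0 : (d : ℚ) ≠ 0 := Nat.cast_ne_zero.mpr (by omega)
      have hrec := expAuxU_rec N s d h hd
      have hsum : ∑ k ∈ Finset.range d, s (d - k) * expAuxU N s k
          = ∑ k ∈ Finset.range d, s (d - k) * t k := by
        apply Finset.sum_congr rfl
        intro k hk
        have hk2 := Finset.mem_range.mp hk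
        rw [ih k hk2 (by omega)]
      rw [htrec d h, ← hsum]
      field_simp at hrec ⊢
      linarith [hrec]
  constructor
  · intro i j hji
    rw [hE]
    apply Finset.sum_eq_zero
    intro r _
    rw [hpow r i j, if_neg (by exact fun hc => absurd (Fin.lt_def.mp hji) (by omega)), mul_zero]
  · intro i j hij
    rw [hE]
    have hij' : (i : ℕ) ≤ (j : ℕ) := hij
    have : ∑ r ∈ Finset.range (N + 1), ((r.factorial : ℚ)⁻¹) * ((S ^ r) i j)
        = expAuxU N s ((j : ℕ) - (i : ℕ)) := by
      rw [expAuxU]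
      apply Finset.sum_congr rfl
      intro r _
      rw [hpow r i j, if_pos hij']
    rw [this, hfinal _ (by omega)]
end

section
/- Let (s_n)_{n≥1} be rationals and define t_0 = 1, t_n = (1/n)·Σ_{k=0}^{n−1} s_{n−k}·t_k. Then for every n ≥ 1, t_n = Σ_{r=1}^{n} Σ_{λ ∈ X_r(n)} Π_{m} s_{h_m} / (h_m · ρ_m!), where X_r(n) is the set of partitions of n with exactly r parts, the product running over the distinct parts h_m of λ with multiplicities ρ_m. -/
open Finset

private def pw (s : ℕ → ℚ) (m : Multiset ℕ) : ℚ :=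
  ∏ h ∈ m.toFinset, s h ^ m.count h / ((h : ℚ) ^ m.count h * (m.count h).factorial)

private def pA (n : ℕ) : Finset (Multiset ℕ) :=
  (Finset.univ : Finset (Nat.Partition n)).image (fun p => p.parts)

private lemma mem_pA {n : ℕ} {m : Multiset ℕ} :
    m ∈ pA n ↔ m.sum = n ∧ ∀ i ∈ m, 0 < i := by
  constructor
  · intro h
    simp only [pA, Finset.mem_image, Finset.mem_univ, true_and] at h
    obtain ⟨p, hp⟩ := h
    subst hp
    exact ⟨p.parts_sum, fun i hi => p.parts_pos hi⟩
  · rintro ⟨h1, h2⟩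
    simp only [pA, Finset.mem_image, Finset.mem_univ, true_and]
    exact ⟨⟨m, fun {i} hi => h2 i hi, h1⟩, rfl⟩

private lemma scalar_step (x hq : ℚ) (c : ℕ) (h0 : hq ≠ 0) :
    x * (x ^ c / (hq ^ c * (Nat.factorial c : ℚ))) =
      hq * (c + 1) * (x ^ (c + 1) / (hq ^ (c + 1) * (Nat.factorial (c + 1) : ℚ))) := by
  have hf : (Nat.factorial c : ℚ) ≠ 0 := Nat.cast_ne_zero.mpr c.factorial_ne_zero
  have hf1 : (Nat.factorial (c+1) : ℚ) ≠ 0 := Nat.cast_ne_zero.mpr (c+1).factorial_ne_zero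
  rw [Nat.factorial_succ, pow_succ, pow_succ]
  push_cast
  field_simp

private lemma pw_prod_over (s : ℕ → ℚ) (m : Multiset ℕ) (t : Finset ℕ)
    (ht : m.toFinset ⊆ t) :
    pw s m = ∏ h ∈ t, s h ^ m.count h / ((h : ℚ) ^ m.count h * (m.count h).factorial) := by
  refine Finset.prod_subset ht ?_
  intro x _ hx
  have : m.count x = 0 := by
    rw [Multiset.count_eq_zero]
    intro hxm
    exact hx (Multiset.mem_toFinset.mpr hxm)
  simp [this]

private lemma pw_cons (s : ℕ → ℚ) (h : ℕ) (hh : 0 < h) (μ : Multiset ℕ) :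
    s h * pw s μ = (h : ℚ) * ((h ::ₘ μ).count h) * pw s (h ::ₘ μ) := by
  classical
  have hsub : μ.toFinset ⊆ (h ::ₘ μ).toFinset := by
    intro x hx
    simp only [Multiset.mem_toFinset] at hx ⊢
    exact Multiset.mem_cons_of_mem hx
  have hmem : h ∈ (h ::ₘ μ).toFinset := by
    simp [Multiset.mem_toFinset]
  set T := (h ::ₘ μ).toFinset with hT
  have e1 : pw s μ = ∏ a ∈ T, s a ^ μ.count a / ((a : ℚ) ^ μ.count a * (μ.count a).factorial) :=
    pw_prod_over s μ T hsub
  have e2 : pw s (h ::ₘ μ) = ∏ a ∈ T,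
      s a ^ (h ::ₘ μ).count a / ((a : ℚ) ^ (h ::ₘ μ).count a * ((h ::ₘ μ).count a).factorial) :=
    rfl
  have e3 : ∏ a ∈ T.erase h,
      s a ^ (h ::ₘ μ).count a / ((a : ℚ) ^ (h ::ₘ μ).count a * ((h ::ₘ μ).count a).factorial)
      = ∏ a ∈ T.erase h, s a ^ μ.count a / ((a : ℚ) ^ μ.count a * (μ.count a).factorial) := by
    refine Finset.prod_congr rfl fun a ha => ?_
    have hne : a ≠ h := Finset.ne_of_mem_erase ha
    rw [Multiset.count_cons_of_ne hne]
  rw [e1, e2, ← Finset.mul_prod_erase T _ hmem, ← Finset.mul_prod_erase T _ hmem, e3,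
    Multiset.count_cons_self]
  have hq0 : (h : ℚ) ≠ 0 := Nat.cast_ne_zero.mpr hh.ne'
  have hs := scalar_step (s h) (h : ℚ) (μ.count h) hq0
  push_cast
  push_cast at hs
  linear_combination (∏ a ∈ T.erase h,
    s a ^ μ.count a / ((a : ℚ) ^ μ.count a * (μ.count a).factorial)) * hs

private lemma pw_erase (s : ℕ → ℚ) (m : Multiset ℕ) (hpos : ∀ i ∈ m, 0 < i)
    (h : ℕ) (hm : h ∈ m) :
    s h * pw s (m.erase h) = (h : ℚ) * (m.count h) * pw s m := by
  have hh : 0 < h := hpos h hm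
  have := pw_cons s h hh (m.erase h)
  rwa [Multiset.cons_erase hm] at this

private lemma per_partition (s : ℕ → ℚ) (n : ℕ) (m : Multiset ℕ)
    (hsum : m.sum = n) (hpos : ∀ i ∈ m, 0 < i) :
    ∑ h ∈ m.toFinset, s h * pw s (m.erase h) = (n : ℚ) * pw s m := by
  have e1 : ∀ h ∈ m.toFinset, s h * pw s (m.erase h) = ((h * m.count h : ℕ) : ℚ) * pw s m := by
    intro h hh
    rw [pw_erase s m hpos h (Multiset.mem_toFinset.mp hh)]
    push_cast
    ring
  rw [Finset.sum_congr rfl e1, ← Finset.sum_mul, ← Nat.cast_sum]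
  congr 2
  have h2 : ∑ a ∈ m.toFinset, m.count a • a = m.sum := by
    have := Finset.sum_multiset_map_count m (id : ℕ → ℕ)
    simpa using this.symm
  calc ∑ a ∈ m.toFinset, a * m.count a = ∑ a ∈ m.toFinset, m.count a • a := by
        refine Finset.sum_congr rfl fun a _ => ?_
        simp [mul_comm, smul_eq_mul]
    _ = m.sum := h2
    _ = n := hsum

private lemma key_rec (s : ℕ → ℚ) (n : ℕ) (hn : 1 ≤ n) :
    ∑ k ∈ Finset.range n, s (n - k) * ∑ m ∈ pA k, pw s m
      = (n : ℚ) * ∑ m ∈ pA n, pw s m := by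
  classical
  rw [show ∑ k ∈ Finset.range n, s (n - k) * ∑ m ∈ pA k, pw s m
      = ∑ p ∈ (Finset.range n).sigma (fun k => pA k), s (n - p.1) * pw s p.2 by
    rw [Finset.sum_sigma]
    exact Finset.sum_congr rfl fun k _ => by rw [Finset.mul_sum]]
  rw [show (n : ℚ) * ∑ m ∈ pA n, pw s m
      = ∑ p ∈ (pA n).sigma (fun m => m.toFinset), s p.2 * pw s (p.1.erase p.2) by
    rw [Finset.sum_sigma, Finset.mul_sum]
    refine Finset.sum_congr rfl fun m hm => ?_
    obtain ⟨hsum, hpos⟩ := mem_pA.mp hm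
    exact (per_partition s n m hsum hpos).symm]
  refine Finset.sum_nbij' (i := fun p => ⟨(n - p.1) ::ₘ p.2, n - p.1⟩)
    (j := fun q => ⟨n - q.2, q.1.erase q.2⟩) ?_ ?_ ?_ ?_ ?_
  · rintro ⟨k, μ⟩ hp
    simp only [Finset.mem_sigma] at hp ⊢
    obtain ⟨hk, hμ⟩ := hp
    rw [Finset.mem_range] at hk
    obtain ⟨hsum, hpos⟩ := mem_pA.mp hμ
    refine ⟨mem_pA.mpr ⟨?_, ?_⟩, ?_⟩
    · rw [Multiset.sum_cons, hsum]; omega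
    · intro i hi
      rcases Multiset.mem_cons.mp hi with h | h
      · omega
      · exact hpos i h
    · simp [Multiset.mem_toFinset]
  · rintro ⟨m, h⟩ hq
    simp only [Finset.mem_sigma] at hq ⊢
    obtain ⟨hm, hh⟩ := hq
    obtain ⟨hsum, hpos⟩ := mem_pA.mp hm
    rw [Multiset.mem_toFinset] at hh
    have hh1 : 0 < h := hpos h hh
    have hhle : h ≤ n := hsum ▸ Multiset.le_sum_of_mem hh
    refine ⟨Finset.mem_range.mpr (by omega), mem_pA.mpr ⟨?_, ?_⟩⟩
    · have := Multiset.cons_erase hh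
      have h2 : h + (m.erase h).sum = n := by
        rw [← hsum]; conv_rhs => rw [← this]
        rw [Multiset.sum_cons]
      omega
    · intro i hi
      exact hpos i (Multiset.mem_of_mem_erase hi)
  · rintro ⟨k, μ⟩ hp
    simp only [Finset.mem_sigma] at hp
    obtain ⟨hk, hμ⟩ := hp
    rw [Finset.mem_range] at hk
    have h1 : n - (n - k) = k := by omega
    simp only [Multiset.erase_cons_head, h1]
  · rintro ⟨m, h⟩ hq
    simp only [Finset.mem_sigma] at hq
    obtain ⟨hm, hh⟩ := hq
    obtain ⟨hsum, hpos⟩ := mem_pA.mp hm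
    rw [Multiset.mem_toFinset] at hh
    have hhle : h ≤ n := hsum ▸ Multiset.le_sum_of_mem hh
    have h1 : n - (n - h) = h := by omega
    simp only [h1, Multiset.cons_erase hh]
  · rintro ⟨k, μ⟩ hp
    simp only [Finset.mem_sigma] at hp
    obtain ⟨hk, hμ⟩ := hp
    simp only [Multiset.erase_cons_head]

theorem recurrence_seq_partition_formula (s t : ℕ → ℚ)
    (ht0 : t 0 = 1)
    (htrec : ∀ n : ℕ, 1 ≤ n → t n = (1 / (n : ℚ)) * ∑ k ∈ Finset.range n, s (n - k) * t k)
    (n : ℕ) (hn : 1 ≤ n) :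
    t n = ∑ r ∈ Finset.Icc 1 n,
      ∑ lam ∈ (Finset.univ : Finset (Nat.Partition n)).filter (fun c => c.parts.card = r),
        ∏ h ∈ lam.parts.toFinset,
          s h ^ lam.parts.count h /
            ((h : ℚ) ^ lam.parts.count h * (lam.parts.count h).factorial) := by
  classical
  have main : ∀ N, t N = ∑ m ∈ pA N, pw s m := by
    intro N
    induction N using Nat.strong_induction_on with
    | _ N ih =>
      rcases Nat.eq_zero_or_pos N with h0 | h1
      · subst h0
        rw [ht0]
        have hA0 : pA 0 = {(0 : Multiset ℕ)} := by
          ext m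
          rw [mem_pA, Finset.mem_singleton]
          constructor
          · rintro ⟨hs0, hpos⟩
            refine Multiset.eq_zero_of_forall_notMem fun x hx => ?_
            have := Multiset.sum_eq_zero_iff.mp hs0 x hx
            exact (hpos x hx).ne' this
          · rintro rfl
            exact ⟨rfl, fun i hi => absurd hi (Multiset.notMem_zero i)⟩
        rw [hA0, Finset.sum_singleton]
        simp [pw]
      · rw [htrec N h1,
          Finset.sum_congr rfl (fun k hk => by rw [ih k (Finset.mem_range.mp hk)]),
          key_rec s N h1]
        have hN : (N : ℚ) ≠ 0 := Nat.cast_ne_zero.mpr h1.ne'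
        field_simp
  have hmap : ∀ lam : Nat.Partition n, lam ∈ (Finset.univ : Finset (Nat.Partition n)) →
      lam.parts.card ∈ Finset.Icc 1 n := by
    intro lam _
    rw [Finset.mem_Icc]
    constructor
    · by_contra hc
      push_neg at hc
      interval_cases h : Multiset.card lam.parts
      have : lam.parts = 0 := Multiset.card_eq_zero.mp h
      have : (0 : ℕ) = n := by rw [← lam.parts_sum, this]; rfl
      omega
    · have h1 : Multiset.card lam.parts • 1 ≤ lam.parts.sum :=
        Multiset.card_nsmul_le_sum fun x hx => lam.parts_pos hx
      rw [smul_eq_mul, mul_one, lam.parts_sum] at h1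
      exact h1
  have hfib := Finset.sum_fiberwise_of_maps_to hmap (fun lam : Nat.Partition n => pw s lam.parts)
  have hinj : ∀ x ∈ (Finset.univ : Finset (Nat.Partition n)),
      ∀ y ∈ (Finset.univ : Finset (Nat.Partition n)), x.parts = y.parts → x = y := by
    intro x _ y _ h
    exact Nat.Partition.ext h
  calc t n = ∑ m ∈ pA n, pw s m := main n
    _ = ∑ lam ∈ (Finset.univ : Finset (Nat.Partition n)), pw s lam.parts :=
        Finset.sum_image hinj
    _ = _ := by
        rw [← hfib]
        rfl
end

section
/- For every positive integer n, p(n) = Σ_{r=1}^{n} Σ_{λ ∈ X_r(n)} Π_m (σ(h_m)/h_m)^{ρ_m} / ρ_m!, where the inner sum runs over partitions λ of n into exactly r parts, with distinct parts h_m of multiplicities ρ_m, σ being the sum-of-divisors function and p the partition function. -/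
open Finset

namespace PCF

noncomputable def a (h : ℕ) : ℚ := ((∑ d ∈ h.divisors, d : ℕ) : ℚ) / (h : ℚ)

noncomputable def W (s : Multiset ℕ) : ℚ :=
  ∏ h ∈ s.toFinset, a h ^ s.count h / ((s.count h).factorial : ℚ)

noncomputable def F (n : ℕ) : ℚ := ∑ lam : Nat.Partition n, W lam.parts

def P (n : ℕ) : ℕ := Fintype.card (Nat.Partition n)

noncomputable def C (g n : ℕ) : ℚ := ∑ lam : Nat.Partition n, (lam.parts.count g : ℚ)


-- W as a product over any superset
lemma W_eq_prod_subset (s : Multiset ℕ) (T : Finset ℕ) (hT : s.toFinset ⊆ T) :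
    W s = ∏ h ∈ T, a h ^ s.count h / ((s.count h).factorial : ℚ) := by
  rw [W]
  apply Finset.prod_subset hT
  intro x _ hx
  rw [Multiset.count_eq_zero_of_notMem (by simpa using hx)]
  simp

lemma W_cons (h : ℕ) (s : Multiset ℕ) :
    ((s.count h : ℚ) + 1) * W (h ::ₘ s) = a h * W s := by
  classical
  set T : Finset ℕ := insert h s.toFinset with hT
  have h1 : W (h ::ₘ s) = ∏ g ∈ T, a g ^ (h ::ₘ s).count g / (((h ::ₘ s).count g).factorial : ℚ) := by
    apply W_eq_prod_subset
    rw [Multiset.toFinset_cons]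
  have h2 : W s = ∏ g ∈ T, a g ^ s.count g / ((s.count g).factorial : ℚ) := by
    apply W_eq_prod_subset
    exact Finset.subset_insert _ _
  rw [h1, h2]
  rw [← Finset.mul_prod_erase T _ (Finset.mem_insert_self h _),
      ← Finset.mul_prod_erase T (fun g => a g ^ s.count g / ((s.count g).factorial : ℚ))
        (Finset.mem_insert_self h _)]
  have hprodeq : ∏ g ∈ T.erase h, a g ^ (h ::ₘ s).count g / (((h ::ₘ s).count g).factorial : ℚ)
      = ∏ g ∈ T.erase h, a g ^ s.count g / ((s.count g).factorial : ℚ) := by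
    apply Finset.prod_congr rfl
    intro g hg
    rw [Multiset.count_cons_of_ne (Finset.ne_of_mem_erase hg)]
  rw [hprodeq, Multiset.count_cons_self]
  have hfac : (((s.count h + 1).factorial : ℚ)) = (s.count h + 1) * ((s.count h).factorial : ℚ) := by
    rw [Nat.factorial_succ]; push_cast; ring
  have hfacne : ((s.count h).factorial : ℚ) ≠ 0 := Nat.cast_ne_zero.mpr (Nat.factorial_ne_zero _)
  have hcne : ((s.count h : ℚ) + 1) ≠ 0 := by positivity
  field_simp [hfac]
  rw [hfac]; ring



lemma part_le {n : ℕ} (lam : Nat.Partition n) {h : ℕ} (hm : h ∈ lam.parts) : h ≤ n := by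
  obtain ⟨t, ht⟩ := Multiset.exists_cons_of_mem hm
  have := lam.parts_sum
  rw [ht, Multiset.sum_cons] at this
  omega

/-- add a part `h` to a partition of `n - h`. -/
def consPart {n : ℕ} (h : ℕ) (hh : 0 < h) (hhn : h ≤ n) (mu : Nat.Partition (n - h)) :
    Nat.Partition n where
  parts := h ::ₘ mu.parts
  parts_pos := by
    intro i hi
    rcases Multiset.mem_cons.mp hi with rfl | hi
    · exact hh
    · exact mu.parts_pos hi
  parts_sum := by rw [Multiset.sum_cons, mu.parts_sum]; omega

/-- remove one copy of `h` from a partition of `n` (junk value if `h` is not a part). -/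
def erasePart {n : ℕ} (h : ℕ) (lam : Nat.Partition n) : Nat.Partition (n - h) :=
  if hm : h ∈ lam.parts then
    { parts := lam.parts.erase h
      parts_pos := fun hi => lam.parts_pos (Multiset.mem_of_mem_erase hi)
      parts_sum := by
        have h1 : h ::ₘ lam.parts.erase h = lam.parts := Multiset.cons_erase hm
        have h2 : h + (lam.parts.erase h).sum = n := by
          conv_rhs => rw [← lam.parts_sum, ← h1]
          rw [Multiset.sum_cons]
        omega }
  else
    { parts := Multiset.replicate (n - h) 1
      parts_pos := fun hi => by simp [Multiset.eq_of_mem_replicate hi]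
      parts_sum := by simp }

lemma sum_filter_mem {n h : ℕ} (hh : 0 < h) (hhn : h ≤ n) {M : Type*} [AddCommMonoid M]
    (f : Multiset ℕ → M) :
    ∑ lam ∈ (Finset.univ : Finset (Nat.Partition n)).filter (fun lam => h ∈ lam.parts),
        f lam.parts
      = ∑ mu : Nat.Partition (n - h), f (h ::ₘ mu.parts) := by
  classical
  apply Finset.sum_nbij' (i := fun lam => erasePart h lam) (j := fun mu => consPart h hh hhn mu)
  · intro lam _; exact Finset.mem_univ _
  · intro mu _
    simp only [Finset.mem_filter, Finset.mem_univ, true_and]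
    exact Multiset.mem_cons_self _ _
  · intro lam hlam
    simp only [Finset.mem_filter, Finset.mem_univ, true_and] at hlam
    apply Nat.Partition.ext
    simp [consPart, erasePart, dif_pos hlam, Multiset.cons_erase hlam]
  · intro mu _
    apply Nat.Partition.ext
    have hm : h ∈ (consPart h hh hhn mu).parts := Multiset.mem_cons_self _ _
    simp [erasePart, dif_pos hm, consPart, Multiset.erase_cons_head]
  · intro lam hlam
    simp only [Finset.mem_filter, Finset.mem_univ, true_and] at hlam
    rw [erasePart, dif_pos hlam]
    simp [Multiset.cons_erase hlam]


lemma count_eq_zero_of_not_Icc {n g : ℕ} (lam : Nat.Partition n) (hg : g ∉ Finset.Icc 1 n) :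
    lam.parts.count g = 0 := by
  rw [Multiset.count_eq_zero]
  intro hm
  exact hg (Finset.mem_Icc.mpr ⟨lam.parts_pos hm, part_le lam hm⟩)

lemma sum_count_mul {n : ℕ} (lam : Nat.Partition n) :
    ∑ g ∈ Finset.Icc 1 n, lam.parts.count g * g = n := by
  have key : lam.parts.sum = ∑ g ∈ lam.parts.toFinset, lam.parts.count g * g := ?_
  conv_rhs => rw [← lam.parts_sum, key]
  · symm
    apply Finset.sum_subset
    · intro g hg
      rw [Multiset.mem_toFinset] at hg
      exact Finset.mem_Icc.mpr ⟨lam.parts_pos hg, part_le lam hg⟩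
    · intro g _ hg
      rw [Multiset.count_eq_zero_of_notMem (by simpa using hg), zero_mul]
  · conv_lhs => rw [← Multiset.toFinset_sum_count_nsmul_eq lam.parts]
    rw [Multiset.sum_sum]
    apply Finset.sum_congr rfl
    intro g _
    simp [Multiset.sum_nsmul]

lemma F_rec (n : ℕ) :
    (n : ℚ) * F n
      = ∑ h ∈ Finset.Icc 1 n, ((∑ d ∈ h.divisors, d : ℕ) : ℚ) * F (n - h) := by
  classical
  have step1 : (n : ℚ) * F n
      = ∑ g ∈ Finset.Icc 1 n, ∑ lam : Nat.Partition n,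
          (g : ℚ) * (lam.parts.count g : ℚ) * W lam.parts := by
    rw [F, Finset.mul_sum, Finset.sum_comm]
    apply Finset.sum_congr rfl
    intro lam _
    rw [← Finset.sum_mul]
    congr 1
    have h1 := sum_count_mul lam
    have : ((∑ g ∈ Finset.Icc 1 n, lam.parts.count g * g : ℕ) : ℚ)
        = ∑ g ∈ Finset.Icc 1 n, (g : ℚ) * (lam.parts.count g : ℚ) := by
      push_cast
      exact Finset.sum_congr rfl fun g _ => by ring
    rw [← this, h1]
  rw [step1]
  apply Finset.sum_congr rfl
  intro g hg
  rw [Finset.mem_Icc] at hg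
  have hg0 : (g : ℚ) ≠ 0 := Nat.cast_ne_zero.mpr (by omega)
  have hfilter : ∑ lam : Nat.Partition n, (g : ℚ) * (lam.parts.count g : ℚ) * W lam.parts
      = ∑ lam ∈ (Finset.univ : Finset (Nat.Partition n)).filter (fun lam => g ∈ lam.parts),
          (g : ℚ) * (lam.parts.count g : ℚ) * W lam.parts := by
    symm
    apply Finset.sum_filter_of_ne
    intro lam _ hne
    by_contra hmem
    rw [Multiset.count_eq_zero_of_notMem hmem] at hne
    simp at hne
  rw [hfilter,
    sum_filter_mem (by omega : 0 < g) hg.2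
      (fun s => (g : ℚ) * (s.count g : ℚ) * W s)]
  rw [F, Finset.mul_sum]
  apply Finset.sum_congr rfl
  intro mu _
  rw [Multiset.count_cons_self, Nat.cast_add, Nat.cast_one]
  have hw := W_cons g mu.parts
  have : (g : ℚ) * ((mu.parts.count g : ℚ) + 1) * W (g ::ₘ mu.parts)
      = (g : ℚ) * (a g * W mu.parts) := by rw [mul_assoc, hw]
  calc (g : ℚ) * ((mu.parts.count g : ℚ) + 1) * W (g ::ₘ mu.parts)
      = ((mu.parts.count g : ℚ) + 1) * W (g ::ₘ mu.parts) * g := by ring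
    _ = a g * W mu.parts * g := by rw [hw]
    _ = ((∑ d ∈ g.divisors, d : ℕ) : ℚ) * W mu.parts := by
        rw [a]
        field_simp

lemma C_rec {g n : ℕ} (hg : 0 < g) (hgn : g ≤ n) :
    C g n = (P (n - g) : ℚ) + C g (n - g) := by
  classical
  have h1 : C g n = ∑ lam ∈ (Finset.univ : Finset (Nat.Partition n)).filter
      (fun lam => g ∈ lam.parts), (lam.parts.count g : ℚ) := by
    rw [C]
    symm
    apply Finset.sum_filter_of_ne
    intro lam _ hne
    rw [← Multiset.count_pos]
    by_contra h
    rw [Nat.eq_zero_of_not_pos h] at hne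
    simp at hne
  rw [h1, sum_filter_mem hg hgn (fun s => (s.count g : ℚ))]
  have : ∀ mu : Nat.Partition (n - g),
      (((g ::ₘ mu.parts).count g : ℚ)) = (mu.parts.count g : ℚ) + 1 := by
    intro mu; rw [Multiset.count_cons_self]; push_cast; ring
  rw [Finset.sum_congr rfl fun mu _ => this mu, Finset.sum_add_distrib,
    Finset.sum_const, Finset.card_univ, nsmul_eq_mul, mul_one, P, C]
  ring

lemma C_formula {g : ℕ} (hg : 0 < g) : ∀ n : ℕ,
    C g n = ∑ j ∈ Finset.range n, if g * (j + 1) ≤ n then (P (n - g * (j + 1)) : ℚ) else 0 := by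
  intro n
  induction n using Nat.strong_induction_on with
  | _ n ih =>
    by_cases hgn : g ≤ n
    · have hn1 : 1 ≤ n := le_trans hg hgn
      have hrec := C_rec hg hgn
      have hih := ih (n - g) (by omega)
      rw [hrec, hih]
      -- rewrite RHS by peeling off j = 0
      have hsplit : ∑ j ∈ Finset.range n, (if g * (j + 1) ≤ n then (P (n - g * (j + 1)) : ℚ) else 0)
          = (if g * 1 ≤ n then (P (n - g * 1) : ℚ) else 0)
            + ∑ j ∈ Finset.range (n - 1),
                (if g * (j + 2) ≤ n then (P (n - g * (j + 2)) : ℚ) else 0) := by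
        have : n = (n - 1) + 1 := by omega
        rw [this, Finset.sum_range_succ']
        rw [← this]
        rw [add_comm]
      rw [hsplit, if_pos (by omega : g * 1 ≤ n)]
      congr 1
      · rw [mul_one]
      -- match the two sums after padding to range n
      have pad1 : ∑ j ∈ Finset.range (n - 1),
            (if g * (j + 2) ≤ n then (P (n - g * (j + 2)) : ℚ) else 0)
          = ∑ j ∈ Finset.range n,
            (if g * (j + 2) ≤ n then (P (n - g * (j + 2)) : ℚ) else 0) := by
        apply Finset.sum_subset
        · apply Finset.range_subset_range.mpr; omega
        · intro j hj hj'
          rw [Finset.mem_range] at hj hj'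
          rw [if_neg]
          intro hcon
          have h2 : j + 2 ≤ g * (j + 2) := Nat.le_mul_of_pos_left _ hg
          omega
      have pad2 : ∑ j ∈ Finset.range (n - g),
            (if g * (j + 1) ≤ n - g then (P (n - g - g * (j + 1)) : ℚ) else 0)
          = ∑ j ∈ Finset.range n,
            (if g * (j + 1) ≤ n - g then (P (n - g - g * (j + 1)) : ℚ) else 0) := by
        apply Finset.sum_subset
        · apply Finset.range_subset_range.mpr; omega
        · intro j hj hj'
          rw [Finset.mem_range] at hj hj'
          rw [if_neg]
          intro hcon
          have h2 : j + 1 ≤ g * (j + 1) := Nat.le_mul_of_pos_left _ hg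
          omega
      rw [pad2, pad1]
      apply Finset.sum_congr rfl
      intro j _
      have hexp : g * (j + 2) = g * (j + 1) + g := by ring
      have hcond : (g * (j + 1) ≤ n - g) ↔ (g * (j + 2) ≤ n) := by omega
      by_cases hc : g * (j + 1) ≤ n - g
      · rw [if_pos hc, if_pos (hcond.mp hc)]
        congr 2
        omega
      · rw [if_neg hc, if_neg (fun h => hc (hcond.mpr h))]
    · -- g > n : both sides zero
      have hC : C g n = 0 := by
        rw [C]
        apply Finset.sum_eq_zero
        intro lam _
        rw [count_eq_zero_of_not_Icc lam (by simp [Finset.mem_Icc]; omega)]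
        simp
      rw [hC]
      symm
      apply Finset.sum_eq_zero
      intro j _
      rw [if_neg]
      intro hcon
      have h2 : g ≤ g * (j + 1) := Nat.le_mul_of_pos_right _ (by omega)
      omega

lemma P_rec (n : ℕ) :
    (n : ℚ) * (P n : ℚ)
      = ∑ m ∈ Finset.Icc 1 n, ((∑ d ∈ m.divisors, d : ℕ) : ℚ) * (P (n - m) : ℚ) := by
  classical
  have step1 : (n : ℚ) * (P n : ℚ) = ∑ g ∈ Finset.Icc 1 n, (g : ℚ) * C g n := by
    have h0 : (n : ℚ) * (P n : ℚ) = ∑ _lam : Nat.Partition n, (n : ℚ) := by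
      rw [Finset.sum_const, Finset.card_univ, nsmul_eq_mul, P]
      ring
    rw [h0]
    have h1 : ∀ lam : Nat.Partition n,
        (n : ℚ) = ∑ g ∈ Finset.Icc 1 n, (g : ℚ) * (lam.parts.count g : ℚ) := by
      intro lam
      calc (n : ℚ) = ((∑ g ∈ Finset.Icc 1 n, lam.parts.count g * g : ℕ) : ℚ) := by
            rw [sum_count_mul lam]
        _ = _ := by push_cast; exact Finset.sum_congr rfl fun g _ => by ring
    rw [Finset.sum_congr rfl fun lam _ => h1 lam, Finset.sum_comm]
    apply Finset.sum_congr rfl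
    intro g _
    rw [C, Finset.mul_sum]
  rw [step1]
  have step2 : ∀ g ∈ Finset.Icc 1 n, (g : ℚ) * C g n
      = ∑ j ∈ (Finset.range n).filter (fun j => g * (j + 1) ≤ n),
          (g : ℚ) * (P (n - g * (j + 1)) : ℚ) := by
    intro g hgIcc
    rw [Finset.mem_Icc] at hgIcc
    rw [C_formula (by omega : 0 < g), Finset.mul_sum, Finset.sum_filter]
    apply Finset.sum_congr rfl
    intro j _
    split <;> simp
  rw [Finset.sum_congr rfl step2]
  have hR : ∀ m ∈ Finset.Icc 1 n, ((∑ d ∈ m.divisors, d : ℕ) : ℚ) * (P (n - m) : ℚ)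
      = ∑ d ∈ m.divisors, (d : ℚ) * (P (n - m) : ℚ) := by
    intro m _
    rw [Nat.cast_sum, Finset.sum_mul]
  rw [Finset.sum_congr rfl hR, Finset.sum_sigma', Finset.sum_sigma']
  apply Finset.sum_nbij' (i := fun p => (⟨p.1 * (p.2 + 1), p.1⟩ : Σ _ : ℕ, ℕ))
    (j := fun q => (⟨q.2, q.1 / q.2 - 1⟩ : Σ _ : ℕ, ℕ))
  · rintro ⟨g, j⟩ hp
    simp only [Finset.mem_sigma, Finset.mem_Icc, Finset.mem_filter, Finset.mem_range] at hp ⊢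
    obtain ⟨⟨hg1, hgn⟩, hjn, hcond⟩ := hp
    refine ⟨⟨Nat.mul_pos (by omega) (Nat.succ_pos j), hcond⟩, ?_⟩
    rw [Nat.mem_divisors]
    exact ⟨⟨j + 1, rfl⟩, Nat.mul_ne_zero (by omega) (by omega)⟩
  · rintro ⟨m, d⟩ hq
    simp only [Finset.mem_sigma, Finset.mem_Icc, Finset.mem_filter, Finset.mem_range] at hq ⊢
    obtain ⟨⟨hm1, hmn⟩, hd⟩ := hq
    rw [Nat.mem_divisors] at hd
    obtain ⟨hdvd, hm0⟩ := hd
    have hd1 : 1 ≤ d := Nat.pos_of_dvd_of_pos hdvd (by omega)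
    have hdm : d ≤ m := Nat.le_of_dvd (by omega) hdvd
    have hdiv1 : 1 ≤ m / d := (Nat.one_le_div_iff (by omega)).mpr hdm
    have hdivm : m / d ≤ m := Nat.div_le_self _ _
    have hmul : d * (m / d) = m := Nat.mul_div_cancel' hdvd
    refine ⟨⟨hd1, le_trans hdm hmn⟩, by omega, ?_⟩
    rw [show m / d - 1 + 1 = m / d by omega, hmul]
    exact hmn
  · rintro ⟨g, j⟩ hp
    simp only [Finset.mem_sigma, Finset.mem_Icc, Finset.mem_filter, Finset.mem_range] at hp
    obtain ⟨⟨hg1, hgn⟩, hjn, hcond⟩ := hp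
    have : g * (j + 1) / g = j + 1 := Nat.mul_div_cancel_left _ (by omega)
    simp only [this]
    simp
  · rintro ⟨m, d⟩ hq
    simp only [Finset.mem_sigma, Finset.mem_Icc, Finset.mem_filter, Finset.mem_range] at hq
    obtain ⟨⟨hm1, hmn⟩, hd⟩ := hq
    rw [Nat.mem_divisors] at hd
    obtain ⟨hdvd, hm0⟩ := hd
    have hd1 : 1 ≤ d := Nat.pos_of_dvd_of_pos hdvd (by omega)
    have hdm : d ≤ m := Nat.le_of_dvd (by omega) hdvd
    have hdiv1 : 1 ≤ m / d := (Nat.one_le_div_iff (by omega)).mpr hdm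
    have hmul : d * (m / d) = m := Nat.mul_div_cancel' hdvd
    have : d * (m / d - 1 + 1) = m := by rw [show m / d - 1 + 1 = m / d by omega]; exact hmul
    simp only [this]
  · rintro ⟨g, j⟩ hp
    rfl

lemma F_eq_P : ∀ n : ℕ, F n = (P n : ℚ) := by
  intro n
  induction n using Nat.strong_induction_on with
  | _ n ih =>
    rcases Nat.eq_zero_or_pos n with rfl | hn
    · have hF : F 0 = 1 := by
        rw [F, Fintype.sum_unique]
        simp [W]
      have hP : P 0 = 1 := by
        rw [P, Fintype.card_unique]
      rw [hF, hP, Nat.cast_one]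
    · have hF := F_rec n
      have hP := P_rec n
      have hsum : ∑ h ∈ Finset.Icc 1 n, ((∑ d ∈ h.divisors, d : ℕ) : ℚ) * F (n - h)
          = ∑ h ∈ Finset.Icc 1 n, ((∑ d ∈ h.divisors, d : ℕ) : ℚ) * (P (n - h) : ℚ) := by
        apply Finset.sum_congr rfl
        intro h hh
        rw [Finset.mem_Icc] at hh
        rw [ih (n - h) (by omega)]
      have : (n : ℚ) * F n = (n : ℚ) * (P n : ℚ) := by rw [hF, hsum, hP]
      exact mul_left_cancel₀ (Nat.cast_ne_zero.mpr (by omega)) this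

lemma card_le_sum (s : Multiset ℕ) (hs : ∀ x ∈ s, 1 ≤ x) : Multiset.card s ≤ s.sum := by
  induction s using Multiset.induction_on with
  | empty => simp
  | cons a t iht =>
    rw [Multiset.card_cons, Multiset.sum_cons]
    have ha : 1 ≤ a := hs a (Multiset.mem_cons_self _ _)
    have := iht (fun x hx => hs x (Multiset.mem_cons_of_mem hx))
    omega

end PCF

theorem partition_count_formula (n : ℕ) (hn : 1 ≤ n) :
    (Fintype.card (Nat.Partition n) : ℚ) =
      ∑ r ∈ Finset.Icc 1 n,
        ∑ lam ∈ (Finset.univ : Finset (Nat.Partition n)).filter (fun c => c.parts.card = r),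
          ∏ h ∈ lam.parts.toFinset,
            (((∑ d ∈ h.divisors, d : ℕ) : ℚ) / (h : ℚ)) ^ lam.parts.count h /
              ((lam.parts.count h).factorial : ℚ) := by
  classical
  have h1 : ∑ r ∈ Finset.Icc 1 n,
        ∑ lam ∈ (Finset.univ : Finset (Nat.Partition n)).filter (fun c => c.parts.card = r),
          PCF.W lam.parts = PCF.F n := by
    rw [PCF.F]
    apply Finset.sum_fiberwise_of_maps_to
    intro lam _
    rw [Finset.mem_Icc]
    constructor
    · by_contra h
      have hcard : Multiset.card lam.parts = 0 := by omega
      have hz : lam.parts = 0 := Multiset.card_eq_zero.mp hcard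
      have hs := lam.parts_sum
      rw [hz] at hs
      simp at hs
      omega
    · calc Multiset.card lam.parts ≤ lam.parts.sum :=
            PCF.card_le_sum _ (fun x hx => lam.parts_pos hx)
        _ = n := lam.parts_sum
  have h2 : ∀ lam : Nat.Partition n,
      (∏ h ∈ lam.parts.toFinset,
          (((∑ d ∈ h.divisors, d : ℕ) : ℚ) / (h : ℚ)) ^ lam.parts.count h /
            ((lam.parts.count h).factorial : ℚ)) = PCF.W lam.parts := by
    intro lam
    rw [PCF.W]
    rfl
  calc (Fintype.card (Nat.Partition n) : ℚ) = (PCF.P n : ℚ) := rfl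
    _ = PCF.F n := (PCF.F_eq_P n).symm
    _ = _ := by
        rw [← h1]
        exact Finset.sum_congr rfl fun r _ => Finset.sum_congr rfl fun lam _ => (h2 lam).symm
end

section
/- Let (s_n)_{n≥1} be rationals and t_0 = 1, t_n = (1/n)·Σ_{k=0}^{n−1} s_{n−k} t_k. Then for every n ≥ 1, s_n/n = Σ_{r=1}^{n} (−1)^{r−1} (r−1)! Σ_{λ ∈ X_r(n)} Π_m t_{h_m}^{ρ_m} / ρ_m!, where X_r(n) is the set of partitions of n with exactly r parts, h_m the distinct parts and ρ_m their multiplicities. -/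
open Finset PowerSeries

namespace InvPartAux

/-- The power series with coefficients `t k` for `k ≥ 1` and `0` at `k = 0`. -/
noncomputable def AA (t : ℕ → ℚ) : ℚ⟦X⟧ := PowerSeries.mk fun k => if k = 0 then 0 else t k

lemma coeff_AA (t : ℕ → ℚ) (k : ℕ) :
    coeff k (AA t) = if k = 0 then 0 else t k := coeff_mk _ _

lemma X_dvd_AA (t : ℕ → ℚ) : (X : ℚ⟦X⟧) ∣ AA t := by
  rw [PowerSeries.X_dvd_iff]
  simp [AA, constantCoeff_mk]

lemma coeff_AA_pow_eq_zero (t : ℕ → ℚ) {n r : ℕ} (h : n < r) :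
    coeff n (AA t ^ r) = 0 :=
  PowerSeries.X_pow_dvd_iff.mp (pow_dvd_pow_of_dvd (X_dvd_AA t) r) n h

/-- The `n`-th coefficient of the formal logarithm of `1 + AA t`. -/
noncomputable def ff (t : ℕ → ℚ) (n : ℕ) : ℚ :=
  ∑ r ∈ Icc 1 n, (-1 : ℚ) ^ (r - 1) / r * coeff n (AA t ^ r)

lemma ff_stable (t : ℕ → ℚ) {n N : ℕ} (hN : n ≤ N) :
    ff t n = ∑ r ∈ Icc 1 N, (-1 : ℚ) ^ (r - 1) / r * coeff n (AA t ^ r) := by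
  refine Finset.sum_subset (Icc_subset_Icc_right hN) ?_
  intro r hr hr'
  simp only [mem_Icc] at hr hr'
  rw [coeff_AA_pow_eq_zero t (by omega), mul_zero]

/-- A truncated version of the formal logarithm of `1 + AA t`. -/
noncomputable def DD (t : ℕ → ℚ) (N : ℕ) : ℚ⟦X⟧ :=
  ∑ r ∈ Icc 1 N, PowerSeries.C ((-1 : ℚ) ^ (r - 1) / r) * AA t ^ r

lemma coeff_DD (t : ℕ → ℚ) {n N : ℕ} (h : n ≤ N) : coeff n (DD t N) = ff t n := by
  rw [DD, map_sum, ff_stable t h]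
  simp only [coeff_C_mul]

lemma derivative_DD (t : ℕ → ℚ) (N : ℕ) :
    d⁄dX ℚ (DD t N) = (∑ j ∈ range N, (-AA t) ^ j) * d⁄dX ℚ (AA t) := by
  rw [DD, map_sum, Finset.sum_mul, ← Finset.Ico_add_one_right_eq_Icc, Finset.sum_Ico_eq_sum_range]
  refine Finset.sum_congr rfl fun j hj => ?_
  have h1 : 1 + j - 1 = j := by omega
  rw [Derivation.leibniz, Derivation.leibniz_pow, derivative_C, smul_zero, add_zero, h1]
  simp only [smul_eq_mul, nsmul_eq_mul]
  have h2 : ((1 + j : ℕ) : ℚ⟦X⟧) = PowerSeries.C ((1 + j : ℕ) : ℚ) := by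
    rw [map_natCast]
  rw [← mul_assoc, h2, ← map_mul]
  have h3 : (-1 : ℚ) ^ j / ((1 + j : ℕ) : ℚ) * ((1 + j : ℕ) : ℚ) = (-1 : ℚ) ^ j := by
    have : ((1 + j : ℕ) : ℚ) ≠ 0 := by positivity
    field_simp
  rw [h3]
  have h4 : PowerSeries.C ((-1 : ℚ) ^ j) = (-1 : ℚ⟦X⟧) ^ j := by
    rw [map_pow, map_neg, map_one]
  rw [h4, neg_pow (AA t) j]
  ring

lemma coeff_X_mul_derivative (φ : ℚ⟦X⟧) (k : ℕ) :
    coeff k (X * d⁄dX ℚ φ) = k * coeff k φ := by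
  cases k with
  | zero => simp
  | succ m =>
    rw [coeff_succ_X_mul, PowerSeries.coeff_derivative]
    push_cast
    ring

lemma coeff_mul_congr (φ ψ ψ' : ℚ⟦X⟧) (n : ℕ) (h : ∀ k ≤ n, coeff k ψ = coeff k ψ') :
    coeff n (φ * ψ) = coeff n (φ * ψ') := by
  rw [PowerSeries.coeff_mul, PowerSeries.coeff_mul]
  refine Finset.sum_congr rfl fun p hp => ?_
  rw [h p.2 (by have := Finset.HasAntidiagonal.mem_antidiagonal.mp hp; omega)]

lemma main_ode (t : ℕ → ℚ) :
    (1 + AA t) * (X * d⁄dX ℚ (PowerSeries.mk (ff t))) = X * d⁄dX ℚ (AA t) := by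
  ext n
  rw [coeff_mul_congr _ _ (X * d⁄dX ℚ (DD t n)) n (fun k hk => by
    rw [coeff_X_mul_derivative, coeff_X_mul_derivative, coeff_mk, coeff_DD t hk])]
  have hgeom : (1 + AA t) * (∑ j ∈ range n, (-AA t) ^ j) = 1 - (-AA t) ^ n := by
    have h := geom_sum_mul (-AA t) n
    linear_combination -h
  have key : (1 + AA t) * (X * d⁄dX ℚ (DD t n)) =
      X * d⁄dX ℚ (AA t) - X * d⁄dX ℚ (AA t) * (-AA t) ^ n := by
    rw [derivative_DD]
    linear_combination X * d⁄dX ℚ (AA t) * hgeom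
  rw [key, map_sub]
  have h0 : coeff n (X * d⁄dX ℚ (AA t) * (-AA t) ^ n) = 0 := by
    have h1 : (X : ℚ⟦X⟧) ^ n ∣ (-AA t) ^ n :=
      pow_dvd_pow_of_dvd (dvd_neg.mpr (X_dvd_AA t)) n
    obtain ⟨B, hB⟩ := h1
    have hdvd : (X : ℚ⟦X⟧) ^ (n + 1) ∣ X * d⁄dX ℚ (AA t) * (-AA t) ^ n :=
      ⟨d⁄dX ℚ (AA t) * B, by rw [hB]; ring⟩
    exact X_pow_dvd_iff.mp hdvd n (Nat.lt_succ_self n)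
  rw [h0, sub_zero]

/-! ### Combinatorial identification of `coeff n (AA t ^ r)` -/

lemma msum_eq (s : Finset ℕ) (m : Multiset ℕ) (h : ∀ a ∈ m, a ∈ s) :
    ∑ i ∈ s, i * m.count i = m.sum := by
  induction m using Multiset.induction with
  | empty => simp
  | cons a m ih =>
    have ha : a ∈ s := h a (Multiset.mem_cons_self a m)
    rw [Multiset.sum_cons, ← ih (fun b hb => h b (Multiset.mem_cons_of_mem hb))]
    simp only [Multiset.count_cons, mul_add, Finset.sum_add_distrib, mul_ite, mul_one, mul_zero]
    rw [Finset.sum_ite_eq' s a (fun i => i), if_pos ha]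
    ring

/-- The multiset associated to a multiplicity function. -/
def partMS (n : ℕ) (k : ℕ → ℕ) : Multiset ℕ := ∑ i ∈ Icc 1 n, Multiset.replicate (k i) i

lemma count_partMS (n : ℕ) (k : ℕ → ℕ) (j : ℕ) :
    (partMS n k).count j = if j ∈ Icc 1 n then k j else 0 := by
  rw [partMS, Multiset.count_sum']
  simp only [Multiset.count_replicate]
  rw [Finset.sum_ite_eq' (Icc 1 n) j k]

lemma mem_partMS {n : ℕ} {k : ℕ → ℕ} {a : ℕ} (h : a ∈ partMS n k) : a ∈ Icc 1 n := by
  rw [partMS, Multiset.mem_sum] at h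
  obtain ⟨i, hi, hai⟩ := h
  rwa [Multiset.eq_of_mem_replicate hai]

lemma sum_partMS (n : ℕ) (k : ℕ → ℕ) :
    (partMS n k).sum = ∑ i ∈ Icc 1 n, i * k i := by
  rw [← msum_eq (Icc 1 n) (partMS n k) (fun a ha => mem_partMS ha)]
  refine Finset.sum_congr rfl fun i hi => ?_
  rw [count_partMS, if_pos hi]

lemma card_partMS (n : ℕ) (k : ℕ → ℕ) :
    Multiset.card (partMS n k) = ∑ i ∈ Icc 1 n, k i := by
  rw [← Multiset.sum_count_eq_card (fun a ha => mem_partMS ha)]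
  refine Finset.sum_congr rfl fun i hi => ?_
  rw [count_partMS, if_pos hi]

lemma parts_mem_Icc {n : ℕ} (lam : Nat.Partition n) {a : ℕ} (ha : a ∈ lam.parts) :
    a ∈ Icc 1 n := by
  rw [mem_Icc]
  refine ⟨lam.parts_pos ha, ?_⟩
  have h1 := Multiset.single_le_sum (fun x _ => Nat.zero_le x) a ha
  have h2 := lam.parts_sum
  omega

lemma coeff_AA_pow (t : ℕ → ℚ) (n r : ℕ) (hn : 1 ≤ n) :
    coeff n (AA t ^ r) =
      (r.factorial : ℚ) *
        ∑ lam ∈ (Finset.univ : Finset (Nat.Partition n)).filter (fun c => c.parts.card = r),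
          ∏ h ∈ lam.parts.toFinset,
            t h ^ lam.parts.count h / ((lam.parts.count h).factorial : ℚ) := by
  classical
  -- replace `AA t` by the "polynomial" `P`
  have hcoeff : coeff n (AA t ^ r) =
      coeff n ((∑ i ∈ Icc 1 n, PowerSeries.C (t i) * X ^ i) ^ r) := by
    rw [PowerSeries.coeff_pow, PowerSeries.coeff_pow]
    refine Finset.sum_congr rfl fun l hl => Finset.prod_congr rfl fun i hi => ?_
    obtain ⟨hsum, hsupp⟩ := Finset.mem_finsuppAntidiag.mp hl
    have hle : l i ≤ n := by
      calc l i ≤ ∑ j ∈ range r, l j :=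
        Finset.single_le_sum (fun j _ => Nat.zero_le (l j)) hi
      _ = n := hsum
    rw [map_sum]
    simp only [coeff_C_mul, coeff_X_pow, mul_ite, mul_one, mul_zero]
    rw [Finset.sum_ite_eq (Icc 1 n) (l i) t, coeff_AA]
    rcases Nat.eq_zero_or_pos (l i) with h0 | h0
    · simp [h0]
    · rw [if_neg (by omega), if_pos (by rw [mem_Icc]; omega)]
  rw [hcoeff, Finset.sum_pow_eq_sum_piAntidiag, map_sum]
  -- compute each coefficient
  have hterm : ∀ k ∈ piAntidiag (Icc 1 n) r,
      coeff n ((Nat.multinomial (Icc 1 n) k : ℚ⟦X⟧) *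
        ∏ i ∈ Icc 1 n, (PowerSeries.C (t i) * X ^ i) ^ k i) =
      if ∑ i ∈ Icc 1 n, i * k i = n then
        (Nat.multinomial (Icc 1 n) k : ℚ) * ∏ i ∈ Icc 1 n, t i ^ k i else 0 := by
    intro k hk
    have hprod : ∏ i ∈ Icc 1 n, (PowerSeries.C (t i) * X ^ i) ^ k i =
        PowerSeries.C (∏ i ∈ Icc 1 n, t i ^ k i) * X ^ (∑ i ∈ Icc 1 n, i * k i) := by
      simp_rw [mul_pow, ← map_pow, ← pow_mul]
      rw [Finset.prod_mul_distrib, ← map_prod, Finset.prod_pow_eq_pow_sum]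
    rw [hprod, ← map_natCast (PowerSeries.C (R := ℚ)) (Nat.multinomial (Icc 1 n) k), ← mul_assoc,
      ← map_mul, coeff_C_mul, coeff_X_pow]
    by_cases hcond : ∑ i ∈ Icc 1 n, i * k i = n
    · rw [if_pos hcond, if_pos hcond.symm, mul_one]
    · rw [if_neg hcond, if_neg (fun h => hcond h.symm), mul_zero]
  rw [Finset.sum_congr rfl hterm, ← Finset.sum_filter]
  -- now a bijection between multiplicity functions and partitions
  rw [Finset.mul_sum]
  refine Finset.sum_bij'
    (i := fun k hk => (⟨partMS n k,
        fun {a} ha => by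
          have := mem_partMS ha; rw [mem_Icc] at this; omega,
        by
          rw [sum_partMS]
          exact (Finset.mem_filter.mp hk).2⟩ : Nat.Partition n))
    (j := fun lam _ => fun i => lam.parts.count i)
    (hi := ?_) (hj := ?_) ?_ ?_ ?_
  · -- hi : lands in partitions with r parts
    intro k hk
    rw [Finset.mem_filter]
    refine ⟨Finset.mem_univ _, ?_⟩
    have hk' := (Finset.mem_filter.mp hk).1
    obtain ⟨hsum, -⟩ := Finset.mem_piAntidiag.mp hk'
    simpa [card_partMS] using hsum
  · -- hj : counts of a partition give a multiplicity function
    intro lam hlam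
    rw [Finset.mem_filter, Finset.mem_piAntidiag]
    have hcard := (Finset.mem_filter.mp hlam).2
    refine ⟨⟨?_, ?_⟩, ?_⟩
    · rw [Multiset.sum_count_eq_card (fun a ha => parts_mem_Icc lam ha)]
      exact hcard
    · intro i hi
      exact parts_mem_Icc lam (Multiset.count_pos.mp (Nat.pos_of_ne_zero hi))
    · rw [msum_eq (Icc 1 n) lam.parts (fun a ha => parts_mem_Icc lam ha)]
      exact lam.parts_sum
  · -- left inverse
    intro k hk
    funext i
    have hk' := (Finset.mem_filter.mp hk).1
    obtain ⟨-, hsupp⟩ := Finset.mem_piAntidiag.mp hk'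
    show (partMS n k).count i = k i
    rw [count_partMS]
    by_cases hi : i ∈ Icc 1 n
    · rw [if_pos hi]
    · rw [if_neg hi]
      by_contra hne
      exact hi (hsupp i (fun h => hne h.symm))
  · -- right inverse
    intro lam hlam
    ext1
    dsimp only
    ext a
    rw [count_partMS]
    by_cases ha : a ∈ Icc 1 n
    · rw [if_pos ha]
    · rw [if_neg ha]
      symm
      rw [Multiset.count_eq_zero]
      exact fun hmem => ha (parts_mem_Icc lam hmem)
  · -- equality of summands
    intro k hk
    have hk' := (Finset.mem_filter.mp hk).1
    obtain ⟨hsum, hsupp⟩ := Finset.mem_piAntidiag.mp hk'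
    -- the product over the partition's support equals the product over `Icc 1 n`
    have hcount : ∀ i ∈ Icc 1 n, (partMS n k).count i = k i := fun i hi => by
      rw [count_partMS, if_pos hi]
    have hsubset : (partMS n k).toFinset ⊆ Icc 1 n := fun a ha =>
      mem_partMS (Multiset.mem_toFinset.mp ha)
    have hprod :
        (∏ h ∈ (partMS n k).toFinset,
            t h ^ (partMS n k).count h / (((partMS n k).count h).factorial : ℚ)) =
        ∏ i ∈ Icc 1 n, t i ^ k i / ((k i).factorial : ℚ) := by
      calc (∏ h ∈ (partMS n k).toFinset,
              t h ^ (partMS n k).count h / (((partMS n k).count h).factorial : ℚ))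
          = ∏ i ∈ Icc 1 n,
              t i ^ (partMS n k).count i / (((partMS n k).count i).factorial : ℚ) := by
            refine Finset.prod_subset hsubset (fun x hx hx' => ?_)
            have hc0 : (partMS n k).count x = 0 := by
              rw [Multiset.count_eq_zero]
              exact fun hmem => hx' (Multiset.mem_toFinset.mpr hmem)
            rw [hc0]
            norm_num
        _ = ∏ i ∈ Icc 1 n, t i ^ k i / ((k i).factorial : ℚ) :=
            Finset.prod_congr rfl fun i hi => by rw [hcount i hi]
    dsimp only
    rw [hprod]
    -- multinomial identity
    have hfacne : (∏ i ∈ Icc 1 n, ((k i).factorial : ℚ)) ≠ 0 :=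
      Finset.prod_ne_zero_iff.mpr fun i _ => Nat.cast_ne_zero.mpr (Nat.factorial_ne_zero _)
    have hspec : (Nat.multinomial (Icc 1 n) k : ℚ) * ∏ i ∈ Icc 1 n, ((k i).factorial : ℚ) =
        (r.factorial : ℚ) := by
      rw [← Nat.cast_prod, ← Nat.cast_mul, mul_comm, Nat.multinomial_spec, hsum]
    have hfac : ∀ i ∈ Icc 1 n, t i ^ k i =
        t i ^ k i / ((k i).factorial : ℚ) * ((k i).factorial : ℚ) := fun i _ =>
      (div_mul_cancel₀ _ (Nat.cast_ne_zero.mpr (Nat.factorial_ne_zero _))).symm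
    rw [Finset.prod_congr rfl hfac, Finset.prod_mul_distrib]
    linear_combination (∏ i ∈ Icc 1 n, t i ^ k i / ((k i).factorial : ℚ)) * hspec

end InvPartAux

theorem inverse_partition_formula (s t : ℕ → ℚ)
    (ht0 : t 0 = 1)
    (htrec : ∀ n : ℕ, 1 ≤ n → t n = (1 / (n : ℚ)) * ∑ k ∈ Finset.range n, s (n - k) * t k)
    (n : ℕ) (hn : 1 ≤ n) :
    s n / (n : ℚ) =
      ∑ r ∈ Finset.Icc 1 n,
        (-1 : ℚ) ^ (r - 1) * (r - 1).factorial *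
          ∑ lam ∈ (Finset.univ : Finset (Nat.Partition n)).filter (fun c => c.parts.card = r),
            ∏ h ∈ lam.parts.toFinset,
              t h ^ lam.parts.count h / ((lam.parts.count h).factorial : ℚ) := by
  classical
  open InvPartAux in
  -- coefficients of `1 + AA t` are exactly `t`
  have hcoeffT : ∀ k, coeff k (1 + AA t) = t k := by
    intro k
    rw [map_add, coeff_AA, PowerSeries.coeff_one]
    cases k with
    | zero => simp [ht0]
    | succ m => simp
  -- the recurrence as a power series identity
  have hS : X * d⁄dX ℚ (1 + AA t) =
      (PowerSeries.mk fun j => if j = 0 then 0 else s j) * (1 + AA t) := by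
    ext m
    rw [coeff_X_mul_derivative, PowerSeries.coeff_mul,
      Finset.Nat.sum_antidiagonal_eq_sum_range_succ_mk]
    simp only [coeff_mk, hcoeffT]
    cases m with
    | zero => simp
    | succ m =>
      rw [Finset.sum_range_succ']
      norm_num
      have hrec := htrec (m + 1) (by omega)
      have hne : ((m + 1 : ℕ) : ℚ) ≠ 0 := by positivity
      rw [hrec, ← Finset.sum_range_reflect (fun j => s (m + 1 - j) * t j) (m + 1),
        ← mul_assoc]
      push_cast
      rw [mul_one_div_cancel (by push_cast at hne; exact hne), one_mul]
      refine Finset.sum_congr rfl fun j hj => ?_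
      rw [Finset.mem_range] at hj
      have e1 : m + 1 - (m - j) = j + 1 := by omega
      rw [e1]
  have hu : IsUnit (1 + AA t) := by
    rw [PowerSeries.isUnit_iff_constantCoeff]
    have : constantCoeff (1 + AA t) = 1 := by
      rw [map_add, map_one]
      simp [AA, constantCoeff_mk]
    rw [this]
    exact isUnit_one
  have hXL : X * d⁄dX ℚ (PowerSeries.mk (ff t)) =
      PowerSeries.mk fun j => if j = 0 then 0 else s j := by
    apply hu.mul_left_cancel
    rw [main_ode t]
    have hDA : d⁄dX ℚ (AA t) = d⁄dX ℚ (1 + AA t) := by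
      rw [map_add, Derivation.map_one_eq_zero, zero_add]
    rw [hDA, hS, mul_comm]
  have hsn : s n = n * ff t n := by
    have hc := congrArg (coeff n) hXL
    rw [coeff_X_mul_derivative, coeff_mk, coeff_mk, if_neg (by omega : ¬ n = 0)] at hc
    exact hc.symm
  have hne : ((n : ℚ)) ≠ 0 := Nat.cast_ne_zero.mpr (by omega)
  rw [hsn, mul_comm, mul_div_assoc, div_self hne, mul_one, ff]
  refine Finset.sum_congr rfl fun r hr => ?_
  rw [Finset.mem_Icc] at hr
  rw [coeff_AA_pow t n r hn, ← mul_assoc]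
  congr 1
  have hfac : ((r : ℚ)) * ((r - 1).factorial : ℚ) = (r.factorial : ℚ) := by
    rw [← Nat.cast_mul, Nat.mul_factorial_pred (by omega)]
  have hrne : ((r : ℚ)) ≠ 0 := Nat.cast_ne_zero.mpr (by omega)
  rw [← hfac]
  field_simp
end

section
/- For every positive integer n, σ(n)/n = Σ_{r=1}^{n} (−1)^{r−1} (r−1)! Σ_{λ ∈ X_r(n)} Π_m p(h_m)^{ρ_m} / ρ_m!, where σ is the sum-of-divisors function, p the partition function, and the inner sum runs over partitions of n with exactly r parts (distinct parts h_m, multiplicities ρ_m). -/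
open Finset

open Polynomial

noncomputable section

def ppQ (k : ℕ) : ℚ := Fintype.card (Nat.Partition k)

def FP (n : ℕ) : Polynomial ℚ := ∑ k ∈ Finset.Icc 1 n, Polynomial.C (ppQ k) * Polynomial.X ^ k

lemma coeff_FP (n m : ℕ) : (FP n).coeff m = if m ∈ Finset.Icc 1 n then ppQ m else 0 := by
  rw [FP, Polynomial.finset_sum_coeff]
  simp only [Polynomial.coeff_C_mul, Polynomial.coeff_X_pow]
  simp only [mul_ite, mul_one, mul_zero]
  simp only [eq_comm (a := m)]
  rw [Finset.sum_ite_eq' (Finset.Icc 1 n) m (fun k => ppQ k)]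

lemma map_prod_CX (m : Multiset ℕ) :
    (m.map (fun i => Polynomial.C (ppQ i) * Polynomial.X ^ i)).prod
      = Polynomial.C ((m.map ppQ).prod) * Polynomial.X ^ m.sum := by
  induction m using Multiset.induction_on with
  | empty => simp
  | cons a s ih =>
    simp only [Multiset.map_cons, Multiset.prod_cons, ih, Multiset.sum_cons, map_mul]
    ring

end

noncomputable section
lemma multinomial_cast_lemma (s : Multiset ℕ) :
    ((s.countPerms : ℚ)) * (s.map ppQ).prod
      = ((Multiset.card s).factorial : ℚ) *
        ∏ h ∈ s.toFinset, ppQ h ^ s.count h / ((s.count h).factorial : ℚ) := by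
  have h2 : s.countPerms = Nat.multinomial s.toFinset s.count := by
    rw [Multiset.countPerms, Finsupp.multinomial_eq]; rfl
  have spec : (∏ h ∈ s.toFinset, (s.count h).factorial) * s.countPerms
      = (Multiset.card s).factorial := by
    rw [h2, ← Multiset.toFinset_sum_count_eq s]
    exact Nat.multinomial_spec _ _
  rw [Finset.prod_div_distrib, Finset.prod_multiset_map_count]
  have hne : (∏ h ∈ s.toFinset, ((s.count h).factorial : ℚ)) ≠ 0 := by positivity
  rw [← spec]
  push_cast
  field_simp
end

noncomputable section
def TQ (m r : ℕ) : ℚ :=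
  ∑ lam ∈ (Finset.univ : Finset (Nat.Partition m)).filter (fun c => c.parts.card = r),
    ∏ h ∈ lam.parts.toFinset,
      ppQ h ^ lam.parts.count h / ((lam.parts.count h).factorial : ℚ)

lemma coeff_FP_pow (n m r : ℕ) (hm1 : 1 ≤ m) (hmn : m ≤ n) :
    ((FP n) ^ r).coeff m = (r.factorial : ℚ) * TQ m r := by
  rw [FP, Finset.sum_pow, Polynomial.finset_sum_coeff]
  have hterm : ∀ k ∈ (Finset.Icc 1 n).sym r,
      ((k.val.countPerms : Polynomial ℚ) *
        (k.val.map (fun i => Polynomial.C (ppQ i) * Polynomial.X ^ i)).prod).coeff m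
      = if k.val.sum = m then (k.val.countPerms : ℚ) * (k.val.map ppQ).prod else 0 := by
    intro k hk
    rw [map_prod_CX, ← Polynomial.C_eq_natCast, ← mul_assoc, ← Polynomial.C_mul,
      Polynomial.coeff_C_mul, Polynomial.coeff_X_pow]
    simp only [mul_ite, mul_one, mul_zero]
    simp [eq_comm]
    rfl
  rw [Finset.sum_congr rfl hterm, ← Finset.sum_filter, TQ, Finset.mul_sum]
  refine Finset.sum_bij
    (fun k hk => (⟨k.val, ?_, ?_⟩ : Nat.Partition m)) ?_ ?_ ?_ ?_
  · intro i hi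
    rcases Finset.mem_filter.1 hk with ⟨hk1, -⟩
    have := Finset.mem_sym_iff.1 hk1 i hi
    exact (Finset.mem_Icc.1 this).1
  · exact (Finset.mem_filter.1 hk).2
  · intro k hk
    simp only [Finset.mem_filter, Finset.mem_univ, true_and]
    exact k.2
  · intro a ha b hb hab
    apply Subtype.ext
    exact congrArg Nat.Partition.parts hab
  · intro lam hlam
    have hcard := (Finset.mem_filter.1 hlam).2
    refine ⟨⟨lam.parts, hcard⟩, ?_, ?_⟩
    · refine Finset.mem_filter.2 ⟨Finset.mem_sym_iff.2 (fun a ha => ?_), lam.parts_sum⟩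
      refine Finset.mem_Icc.2 ⟨lam.parts_pos ha, ?_⟩
      calc a ≤ lam.parts.sum := Multiset.single_le_sum (fun x _ => Nat.zero_le x) _ ha
        _ = m := lam.parts_sum
        _ ≤ n := hmn
    · exact (Nat.Partition.ext rfl).symm
  · intro k hk
    have hcard : Multiset.card k.val = r := k.2
    rw [multinomial_cast_lemma, hcard]
end

noncomputable section
def BQ (m : ℕ) : ℚ :=
  ∑ r ∈ Finset.Icc 1 m, (-1 : ℚ) ^ (r - 1) * (r - 1).factorial * TQ m r

lemma card_le_sum_of_parts {m : ℕ} (lam : Nat.Partition m) : Multiset.card lam.parts ≤ m := by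
  calc Multiset.card lam.parts = Multiset.card lam.parts * 1 := (mul_one _).symm
    _ ≤ lam.parts.sum := Multiset.card_nsmul_le_sum (fun x hx => lam.parts_pos hx)
    _ = m := lam.parts_sum

lemma TQ_eq_zero {m r : ℕ} (h : m < r) : TQ m r = 0 := by
  rw [TQ, Finset.sum_eq_zero]
  intro lam hlam
  simp only [Finset.mem_filter] at hlam
  exact absurd (hlam.2 ▸ card_le_sum_of_parts lam) (not_le.2 h)

def LP (n : ℕ) : Polynomial ℚ :=
  ∑ r ∈ Finset.Icc 1 n, Polynomial.C ((-1 : ℚ)^(r-1) / r) * (FP n)^r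

lemma coeff_LP (n m : ℕ) (hm1 : 1 ≤ m) (hmn : m ≤ n) : (LP n).coeff m = BQ m := by
  rw [LP, Polynomial.finset_sum_coeff]
  have hterm : ∀ r ∈ Finset.Icc 1 n,
      (Polynomial.C ((-1 : ℚ)^(r-1) / r) * (FP n)^r).coeff m
        = (-1 : ℚ) ^ (r - 1) * (r - 1).factorial * TQ m r := by
    intro r hr
    have hr1 : 1 ≤ r := (Finset.mem_Icc.1 hr).1
    rw [Polynomial.coeff_C_mul, coeff_FP_pow n m r hm1 hmn]
    have hfact : (r.factorial : ℚ) = r * (r-1).factorial := by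
      obtain ⟨i, rfl⟩ : ∃ i, r = i + 1 := ⟨r - 1, by omega⟩
      rw [Nat.factorial_succ]
      push_cast
      ring
    have hrne : (r : ℚ) ≠ 0 := Nat.cast_ne_zero.2 (by omega)
    rw [hfact]
    field_simp
  rw [Finset.sum_congr rfl hterm, BQ]
  refine (Finset.sum_subset (Finset.Icc_subset_Icc_right hmn) ?_).symm
  intro r hr hrm
  rw [TQ_eq_zero (by simp only [Finset.mem_Icc] at hr hrm; omega), mul_zero]

lemma deriv_LP (n : ℕ) :
    Polynomial.derivative (LP n)
      = ∑ r ∈ Finset.Icc 1 n,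
          Polynomial.C ((-1 : ℚ)^(r-1)) * (FP n)^(r-1) * Polynomial.derivative (FP n) := by
  rw [LP, map_sum]
  refine Finset.sum_congr rfl (fun r hr => ?_)
  have hr1 : 1 ≤ r := (Finset.mem_Icc.1 hr).1
  have hrne : (r : ℚ) ≠ 0 := Nat.cast_ne_zero.2 (by omega)
  rw [Polynomial.derivative_C_mul, Polynomial.derivative_pow]
  have h2 : Polynomial.C ((-1:ℚ)^(r-1)/r) * (Polynomial.C (r:ℚ) * (FP n)^(r-1)
        * Polynomial.derivative (FP n))
      = Polynomial.C ((-1:ℚ)^(r-1)/r * r) * ((FP n)^(r-1) * Polynomial.derivative (FP n)) := by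
    rw [Polynomial.C_mul]; ring
  rw [h2, div_mul_cancel₀ _ hrne, ← mul_assoc]

lemma key_identity (n : ℕ) (hn : 1 ≤ n) :
    (1 + FP n) * Polynomial.derivative (LP n)
      = Polynomial.derivative (FP n)
        - Polynomial.C ((-1 : ℚ)^n) * ((FP n)^n * Polynomial.derivative (FP n)) := by
  rw [deriv_LP, Finset.mul_sum]
  have hterm : ∀ r ∈ Finset.Icc 1 n,
      (1 + FP n) * (Polynomial.C ((-1 : ℚ)^(r-1)) * (FP n)^(r-1) * Polynomial.derivative (FP n))
        = (fun i => Polynomial.C ((-1 : ℚ)^i) * (FP n)^i * Polynomial.derivative (FP n)) (r-1)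
          - (fun i => Polynomial.C ((-1 : ℚ)^i) * (FP n)^i * Polynomial.derivative (FP n)) r := by
    intro r hr
    have hr1 : 1 ≤ r := (Finset.mem_Icc.1 hr).1
    obtain ⟨i, rfl⟩ : ∃ i, r = i + 1 := ⟨r - 1, by omega⟩
    simp only [Nat.add_sub_cancel]
    have : ((-1 : ℚ))^(i+1) = -((-1 : ℚ)^i) := by ring
    rw [this, map_neg, pow_succ]
    ring
  rw [Finset.sum_congr rfl hterm, ← Finset.Ico_add_one_right_eq_Icc, Finset.sum_Ico_eq_sum_range]
  simp only [Nat.add_sub_cancel, show ∀ i : ℕ, 1 + i - 1 = i from fun i => by omega,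
    show ∀ i : ℕ, 1 + i = i + 1 from fun i => by omega]
  rw [Finset.sum_range_sub' (fun i => Polynomial.C ((-1 : ℚ)^i) * (FP n)^i
    * Polynomial.derivative (FP n))]
  simp only [pow_zero, Polynomial.C_1, one_mul]
  ring
end

noncomputable section
lemma ppQ_zero : ppQ 0 = 1 := by simp [ppQ]

lemma FP_coeff_zero (n : ℕ) : (FP n).coeff 0 = 0 := by
  rw [coeff_FP]; simp

lemma coeff_FP_pow_eq_zero {n m r : ℕ} (h : m < r) : ((FP n)^r).coeff m = 0 := by
  have hdvd : (Polynomial.X : Polynomial ℚ)^r ∣ (FP n)^r :=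
    pow_dvd_pow_of_dvd (Polynomial.X_dvd_iff.2 (FP_coeff_zero n)) r
  obtain ⟨q, hq⟩ := hdvd
  rw [hq, mul_comm, Polynomial.coeff_mul_X_pow']
  simp [Nat.not_le.2 h]

lemma recurrence_II (n : ℕ) (hn : 1 ≤ n) :
    ∑ k ∈ Finset.range n, ppQ k * ((n - k : ℕ) : ℚ) * BQ (n - k) = (n : ℚ) * ppQ n := by
  have hkey := key_identity n hn
  have hc := congrArg (fun p => Polynomial.coeff p (n-1)) hkey
  -- RHS of hc
  have hR1 : (Polynomial.derivative (FP n)).coeff (n-1) = (n : ℚ) * ppQ n := by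
    rw [Polynomial.coeff_derivative, coeff_FP]
    have : n - 1 + 1 = n := by omega
    rw [this]
    simp only [Finset.mem_Icc, hn, le_refl, and_self, if_true]
    rw [Nat.cast_sub hn]
    push_cast
    ring
  have hR2 : (Polynomial.C ((-1 : ℚ)^n) * ((FP n)^n * Polynomial.derivative (FP n))).coeff (n-1)
      = 0 := by
    rw [Polynomial.coeff_C_mul, Polynomial.coeff_mul]
    rw [Finset.sum_eq_zero, mul_zero]
    intro x hx
    have hx1 : x.1 ≤ n - 1 := by
      have := Finset.HasAntidiagonal.antidiagonal.fst_le hx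
      omega
    rw [coeff_FP_pow_eq_zero (by omega), zero_mul]
  -- LHS of hc
  have hL : ((1 + FP n) * Polynomial.derivative (LP n)).coeff (n-1)
      = ∑ k ∈ Finset.range n, ppQ k * ((n - k : ℕ) : ℚ) * BQ (n - k) := by
    rw [add_mul, one_mul, Polynomial.coeff_add]
    have hdL : ∀ j, j ≤ n - 1 → (Polynomial.derivative (LP n)).coeff j
        = ((n - (n - 1 - j) : ℕ) : ℚ) * BQ (n - (n - 1 - j)) := by
      intro j hj
      rw [Polynomial.coeff_derivative, coeff_LP n (j+1) (by omega) (by omega)]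
      have : n - (n - 1 - j) = j + 1 := by omega
      rw [this]
      push_cast
      ring
    have hmul : (FP n * Polynomial.derivative (LP n)).coeff (n-1)
        = ∑ k ∈ Finset.range n, (FP n).coeff k * (((n - k : ℕ) : ℚ) * BQ (n - k)) := by
      rw [Polynomial.coeff_mul, Finset.Nat.sum_antidiagonal_eq_sum_range_succ_mk]
      rw [show (n - 1).succ = n from by omega]
      refine Finset.sum_congr rfl (fun k hk => ?_)
      have hk' : k < n := Finset.mem_range.1 hk
      rw [Polynomial.coeff_derivative, coeff_LP n (n-1-k+1) (by omega) (by omega)]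
      rw [show n - 1 - k + 1 = n - k from by omega]
      have hcast : ((n-1-k:ℕ):ℚ) + 1 = ((n-k:ℕ):ℚ) := by
        rw [show n-k = (n-1-k)+1 from by omega]
        push_cast
        ring
      rw [hcast]
      ring
    have hdL0 : (Polynomial.derivative (LP n)).coeff (n-1) = (n : ℚ) * BQ n := by
      rw [Polynomial.coeff_derivative, coeff_LP n (n-1+1) (by omega) (by omega),
        show n-1+1 = n from by omega]
      push_cast
      rw [Nat.cast_sub hn]
      push_cast
      ring
    rw [hmul, hdL0]
    have hsplit : ∀ k ∈ Finset.range n, ppQ k * ((n-k:ℕ):ℚ) * BQ (n-k)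
        = (FP n).coeff k * (((n-k:ℕ):ℚ) * BQ (n-k)) + (if k = 0 then (n:ℚ) * BQ n else 0) := by
      intro k hk
      have hk' : k < n := Finset.mem_range.1 hk
      rcases Nat.eq_zero_or_pos k with rfl | hkpos
      · rw [coeff_FP]
        simp [ppQ_zero]
      · rw [coeff_FP, if_pos (Finset.mem_Icc.2 ⟨hkpos, by omega⟩), if_neg (by omega)]
        ring
    rw [Finset.sum_congr rfl hsplit, Finset.sum_add_distrib]
    have h0 : (∑ k ∈ Finset.range n, if k = 0 then (n:ℚ) * BQ n else 0) = (n:ℚ) * BQ n := by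
      rw [Finset.sum_ite_eq' (Finset.range n) 0 (fun _ => (n:ℚ) * BQ n)]
      rw [if_pos (Finset.mem_range.2 (by omega))]
    rw [h0]
    ring
  rw [hL] at hc
  rw [hc, Polynomial.coeff_sub, hR1, hR2, sub_zero]
end

section Euler

lemma count_mul_le_s10 {n j : ℕ} (lam : Nat.Partition n) (hj : 1 ≤ j) :
    j * lam.parts.count j ≤ n := by
  have hle : Multiset.replicate (lam.parts.count j) j ≤ lam.parts :=
    Multiset.le_count_iff_replicate_le.1 le_rfl
  obtain ⟨u, hu⟩ := Multiset.le_iff_exists_add.1 hle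
  have := congrArg Multiset.sum hu
  rw [Multiset.sum_add, Multiset.sum_replicate, smul_eq_mul, lam.parts_sum] at this
  rw [mul_comm]
  omega

lemma card_filter_count (n j t : ℕ) (hj : 1 ≤ j) (ht : 1 ≤ t) (hjt : j * t ≤ n) :
    ((Finset.univ : Finset (Nat.Partition n)).filter (fun lam => t ≤ lam.parts.count j)).card
      = Fintype.card (Nat.Partition (n - j * t)) := by
  rw [← Finset.card_univ]
  refine Finset.card_bij'
    (fun lam hlam => ⟨lam.parts - Multiset.replicate t j, ?_, ?_⟩)
    (fun mu _ => ⟨mu.parts + Multiset.replicate t j, ?_, ?_⟩) ?_ ?_ ?_ ?_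
  · intro i hi
    exact lam.parts_pos (Multiset.mem_of_le (Multiset.sub_le_self _ _) hi)
  · have hcnt : t ≤ lam.parts.count j := (Finset.mem_filter.1 hlam).2
    have hle : Multiset.replicate t j ≤ lam.parts :=
      Multiset.le_count_iff_replicate_le.1 hcnt
    have hsum := congrArg Multiset.sum (tsub_add_cancel_of_le hle)
    rw [Multiset.sum_add, Multiset.sum_replicate, smul_eq_mul, mul_comm t j, lam.parts_sum] at hsum
    omega
  · intro i hi
    rcases Multiset.mem_add.1 hi with h | h
    · exact mu.parts_pos h
    · rw [Multiset.eq_of_mem_replicate h]; omega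
  · rw [Multiset.sum_add, Multiset.sum_replicate, smul_eq_mul, mu.parts_sum, mul_comm t j]
    omega
  · intro lam hlam
    exact Finset.mem_univ _
  · intro mu hmu
    refine Finset.mem_filter.2 ⟨Finset.mem_univ _, ?_⟩
    simp [Multiset.count_replicate_self]
  · intro lam hlam
    have hcnt : t ≤ lam.parts.count j := (Finset.mem_filter.1 hlam).2
    have hle : Multiset.replicate t j ≤ lam.parts :=
      Multiset.le_count_iff_replicate_le.1 hcnt
    exact Nat.Partition.ext (tsub_add_cancel_of_le hle)
  · intro mu hmu
    exact Nat.Partition.ext (add_tsub_cancel_right _ _)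

lemma card_filter_count_zero (n j t : ℕ) (hj : 1 ≤ j) (hjt : n < j * t) :
    ((Finset.univ : Finset (Nat.Partition n)).filter (fun lam => t ≤ lam.parts.count j)).card
      = 0 := by
  rw [Finset.card_eq_zero, Finset.filter_eq_empty_iff]
  intro lam _
  intro hcnt
  have := count_mul_le_s10 lam hj (n := n)
  have : j * t ≤ j * lam.parts.count j := Nat.mul_le_mul_left _ hcnt
  have := count_mul_le_s10 lam hj (n := n)
  omega

end Euler

section Euler2

lemma recurrence_I (n : ℕ) (hn : 1 ≤ n) :
    ∑ k ∈ Finset.Icc 1 n, (∑ d ∈ k.divisors, d) * Fintype.card (Nat.Partition (n - k))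
      = n * Fintype.card (Nat.Partition n) := by
  classical
  set pN : ℕ → ℕ := fun k => Fintype.card (Nat.Partition k) with hpN
  -- Step 1 : n * pN n = sum of parts sums
  have h1 : ∑ lam : Nat.Partition n, lam.parts.sum = n * pN n := by
    rw [Finset.sum_congr rfl (fun lam _ => lam.parts_sum), Finset.sum_const, smul_eq_mul,
      Finset.card_univ, mul_comm]
  -- Step 2 : parts sum as sum over Icc 1 n of h * count h
  have h2 : ∀ lam : Nat.Partition n, lam.parts.sum
      = ∑ h ∈ Finset.Icc 1 n, h * lam.parts.count h := by
    intro lam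
    have hmap : lam.parts.sum = ∑ a ∈ lam.parts.toFinset, lam.parts.count a • a := by
      conv_lhs => rw [← Multiset.map_id lam.parts]
      exact Finset.sum_multiset_map_count lam.parts id
    have hsub : lam.parts.toFinset ⊆ Finset.Icc 1 n := by
      intro a ha
      have hmem := Multiset.mem_toFinset.1 ha
      refine Finset.mem_Icc.2 ⟨lam.parts_pos hmem, ?_⟩
      calc a ≤ lam.parts.sum := Multiset.single_le_sum (fun x _ => Nat.zero_le x) _ hmem
        _ = n := lam.parts_sum
    have hzero : ∀ a ∈ Finset.Icc 1 n, a ∉ lam.parts.toFinset → lam.parts.count a • a = 0 := by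
      intro a _ ha
      rw [Multiset.count_eq_zero_of_notMem (fun hc => ha (Multiset.mem_toFinset.2 hc))]
      simp
    rw [hmap, Finset.sum_subset hsub hzero]
    exact Finset.sum_congr rfl (fun a _ => by rw [smul_eq_mul, mul_comm])
  -- Step 4 : sum over partitions of count
  have h4 : ∀ h ∈ Finset.Icc 1 n, ∑ lam : Nat.Partition n, lam.parts.count h
      = ∑ t ∈ Finset.Icc 1 n, (if h * t ≤ n then pN (n - h * t) else 0) := by
    intro h hh
    have hh1 : 1 ≤ h := (Finset.mem_Icc.1 hh).1
    have hcnt : ∀ lam : Nat.Partition n, lam.parts.count h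
        = ∑ t ∈ Finset.Icc 1 n, (if t ≤ lam.parts.count h then 1 else 0) := by
      intro lam
      have hcle : lam.parts.count h ≤ n := by
        have := count_mul_le_s10 lam hh1 (n := n)
        nlinarith
      rw [← Finset.card_filter]
      have : (Finset.Icc 1 n).filter (fun t => t ≤ lam.parts.count h)
          = Finset.Icc 1 (lam.parts.count h) := by
        ext x
        simp only [Finset.mem_filter, Finset.mem_Icc]
        omega
      rw [this, Nat.card_Icc]
      omega
    rw [Finset.sum_congr rfl (fun lam _ => hcnt lam), Finset.sum_comm]
    refine Finset.sum_congr rfl (fun t ht => ?_)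
    have ht1 : 1 ≤ t := (Finset.mem_Icc.1 ht).1
    rw [← Finset.card_filter]
    by_cases hcase : h * t ≤ n
    · rw [if_pos hcase]
      exact card_filter_count n h t hh1 ht1 hcase
    · rw [if_neg hcase]
      exact card_filter_count_zero n h t hh1 (by omega)
  -- combine steps
  have h5 : n * pN n
      = ∑ h ∈ Finset.Icc 1 n, ∑ t ∈ Finset.Icc 1 n,
          (if h * t ≤ n then h * pN (n - h * t) else 0) := by
    rw [← h1, Finset.sum_congr rfl (fun lam _ => h2 lam), Finset.sum_comm]
    refine Finset.sum_congr rfl (fun h hh => ?_)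
    rw [← Finset.mul_sum, h4 h hh, Finset.mul_sum]
    refine Finset.sum_congr rfl (fun t _ => ?_)
    split_ifs <;> simp
  rw [h5]
  -- Step 6 : reindex pairs (h,t) with ht ≤ n to (k, d)
  have hprod : ∑ h ∈ Finset.Icc 1 n, ∑ t ∈ Finset.Icc 1 n,
        (if h * t ≤ n then h * pN (n - h * t) else 0)
      = ∑ q ∈ (Finset.Icc 1 n ×ˢ Finset.Icc 1 n).filter (fun q => q.1 * q.2 ≤ n),
          q.1 * pN (n - q.1 * q.2) := by
    rw [Finset.sum_filter, Finset.sum_product]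
  rw [hprod]
  have h6 : ∑ q ∈ (Finset.Icc 1 n ×ˢ Finset.Icc 1 n).filter (fun q => q.1 * q.2 ≤ n),
        q.1 * pN (n - q.1 * q.2)
      = ∑ x ∈ (Finset.Icc 1 n).sigma (fun k => k.divisors), x.2 * pN (n - x.1) := by
    refine Finset.sum_bij (fun q _ => (⟨q.1 * q.2, q.1⟩ : Σ _ : ℕ, ℕ)) ?_ ?_ ?_ ?_
    · intro q hq
      rw [Finset.mem_filter, Finset.mem_product, Finset.mem_Icc, Finset.mem_Icc] at hq
      refine Finset.mem_sigma.2 ⟨Finset.mem_Icc.2 ⟨?_, hq.2⟩, ?_⟩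
      · nlinarith [hq.1.1.1, hq.1.2.1]
      · exact Nat.mem_divisors.2 ⟨dvd_mul_right _ _, by nlinarith [hq.1.1.1, hq.1.2.1]⟩
    · intro a ha b hb hab
      rw [Finset.mem_filter, Finset.mem_product, Finset.mem_Icc, Finset.mem_Icc] at ha hb
      have h1' : a.1 = b.1 := by
        have := congrArg (fun x : (Σ _ : ℕ, ℕ) => x.2) hab
        simpa using this
      have h2' : a.1 * a.2 = b.1 * b.2 := by
        have := congrArg (fun x : (Σ _ : ℕ, ℕ) => x.1) hab
        simpa using this
      have : a.2 = b.2 := by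
        rw [h1'] at h2'
        exact Nat.eq_of_mul_eq_mul_left (by omega) h2'
      exact Prod.ext h1' this
    · intro x hx
      rw [Finset.mem_sigma, Finset.mem_Icc, Nat.mem_divisors] at hx
      obtain ⟨⟨hk1, hkn⟩, hd, hk0⟩ := hx
      have hd1 : 1 ≤ x.2 := Nat.pos_of_dvd_of_pos hd (by omega)
      have hdn : x.2 ≤ n := le_trans (Nat.le_of_dvd (by omega) hd) hkn
      refine ⟨(x.2, x.1 / x.2), ?_, ?_⟩
      · rw [Finset.mem_filter, Finset.mem_product, Finset.mem_Icc, Finset.mem_Icc]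
        have hq : x.2 * (x.1 / x.2) = x.1 := Nat.mul_div_cancel' hd
        refine ⟨⟨⟨hd1, hdn⟩, ⟨?_, ?_⟩⟩, ?_⟩
        · have : 0 < x.1 / x.2 := Nat.div_pos (Nat.le_of_dvd (by omega) hd) (by omega)
          omega
        · exact le_trans (Nat.div_le_self _ _) hkn
        · rw [hq]; omega
      · have hq : x.2 * (x.1 / x.2) = x.1 := Nat.mul_div_cancel' hd
        exact Sigma.ext hq (heq_of_eq rfl)
    · intro q hq
      simp
  rw [h6, Finset.sum_sigma]
  refine (Finset.sum_congr rfl (fun k _ => ?_)).symm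
  rw [Finset.sum_mul]

end Euler2

section Final

lemma main_eq : ∀ n : ℕ, 1 ≤ n → ((∑ d ∈ n.divisors, d : ℕ) : ℚ) = (n : ℚ) * BQ n := by
  intro n
  induction n using Nat.strong_induction_on with
  | _ n ih =>
  intro hn
  -- recurrence II in Icc form
  have hII : ∑ j ∈ Finset.Icc 1 n, ppQ (n - j) * (((j : ℕ) : ℚ) * BQ j) = (n : ℚ) * ppQ n := by
    rw [← recurrence_II n hn]
    refine (Finset.sum_nbij' (fun j => n - j) (fun k => n - k) ?_ ?_ ?_ ?_ ?_).symm
    · intro k hk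
      have := Finset.mem_range.1 hk
      show n - k ∈ Finset.Icc 1 n
      exact Finset.mem_Icc.2 ⟨by omega, by omega⟩
    · intro j hj
      have := Finset.mem_Icc.1 hj
      show n - j ∈ Finset.range n
      exact Finset.mem_range.2 (by omega)
    · intro k hk
      have := Finset.mem_range.1 hk
      show n - (n - k) = k
      omega
    · intro j hj
      have := Finset.mem_Icc.1 hj
      show n - (n - j) = j
      omega
    · intro k hk
      have hk' := Finset.mem_range.1 hk
      show ppQ k * ((n - k : ℕ) : ℚ) * BQ (n - k)
          = ppQ (n - (n - k)) * (((n - k : ℕ) : ℚ) * BQ (n - k))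
      rw [show n - (n - k) = k from by omega]
      ring
  -- recurrence I in ℚ
  have hI : ∑ j ∈ Finset.Icc 1 n, ((∑ d ∈ j.divisors, d : ℕ) : ℚ) * ppQ (n - j)
      = (n : ℚ) * ppQ n := by
    have := recurrence_I n hn
    have hc := congrArg (fun m : ℕ => (m : ℚ)) this
    push_cast at hc
    simp only [ppQ]
    push_cast
    exact hc
  have hdiff : ∑ j ∈ Finset.Icc 1 n,
      (ppQ (n - j) * (((j : ℕ) : ℚ) * BQ j) - ((∑ d ∈ j.divisors, d : ℕ) : ℚ) * ppQ (n - j))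
      = 0 := by
    rw [Finset.sum_sub_distrib, hII, hI, sub_self]
  have hsingle : ∑ j ∈ Finset.Icc 1 n,
      (ppQ (n - j) * (((j : ℕ) : ℚ) * BQ j) - ((∑ d ∈ j.divisors, d : ℕ) : ℚ) * ppQ (n - j))
      = ppQ 0 * ((n : ℚ) * BQ n) - ((∑ d ∈ n.divisors, d : ℕ) : ℚ) * ppQ 0 := by
    rw [Finset.sum_eq_single_of_mem n (Finset.mem_Icc.2 ⟨hn, le_rfl⟩)]
    · rw [Nat.sub_self]
    · intro j hj hjn
      have hj' := Finset.mem_Icc.1 hj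
      have := ih j (by omega) hj'.1
      rw [this]
      ring
  rw [hsingle, ppQ_zero] at hdiff
  linarith [hdiff]

end Final

theorem sigma_partition_formula (n : ℕ) (hn : 1 ≤ n) :
    ((∑ d ∈ n.divisors, d : ℕ) : ℚ) / (n : ℚ) =
      ∑ r ∈ Finset.Icc 1 n,
        (-1 : ℚ) ^ (r - 1) * (r - 1).factorial *
          ∑ lam ∈ (Finset.univ : Finset (Nat.Partition n)).filter (fun c => c.parts.card = r),
            ∏ h ∈ lam.parts.toFinset,
              (Fintype.card (Nat.Partition h) : ℚ) ^ lam.parts.count h /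
                ((lam.parts.count h).factorial : ℚ) := by
  have hB : (∑ r ∈ Finset.Icc 1 n,
        (-1 : ℚ) ^ (r - 1) * (r - 1).factorial *
          ∑ lam ∈ (Finset.univ : Finset (Nat.Partition n)).filter (fun c => c.parts.card = r),
            ∏ h ∈ lam.parts.toFinset,
              (Fintype.card (Nat.Partition h) : ℚ) ^ lam.parts.count h /
                ((lam.parts.count h).factorial : ℚ)) = BQ n := by
    simp only [BQ, TQ, ppQ]
  rw [hB, main_eq n hn]
  have hne : (n : ℚ) ≠ 0 := Nat.cast_ne_zero.2 (by omega)
  field_simp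
end

section
/- For each positive integer n and each part size o ≤ n, the total number of occurrences of o among all partitions of n equals Σ_{m=1}^{⌊n/o⌋} p(n − m·o), where p is the partition function. -/
open Finset

def partAddEquiv (n m o : ℕ) (ho : 0 < o) (h : m * o ≤ n) :
    Nat.Partition (n - m * o) ≃ {c : Nat.Partition n // m ≤ c.parts.count o} where
  toFun p := ⟨⟨p.parts + Multiset.replicate m o, by
      intro i hi
      rcases Multiset.mem_add.1 hi with h' | h'
      · exact p.parts_pos h'
      · rwa [Multiset.eq_of_mem_replicate h'], by
      simp [p.parts_sum, Multiset.sum_replicate, Nat.sub_add_cancel h, mul_comm]⟩, by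
      simp [Multiset.count_replicate]⟩
  invFun c := ⟨c.1.parts - Multiset.replicate m o, by
      intro i hi
      exact c.1.parts_pos (Multiset.mem_of_le (tsub_le_self) hi), by
      have hle : Multiset.replicate m o ≤ c.1.parts :=
        Multiset.le_count_iff_replicate_le.1 c.2
      have := tsub_add_cancel_of_le hle
      have hs : (c.1.parts - Multiset.replicate m o).sum + (Multiset.replicate m o).sum = n := by
        rw [← Multiset.sum_add, this, c.1.parts_sum]
      rw [Multiset.sum_replicate, smul_eq_mul] at hs
      omega⟩
  left_inv p := by
    ext1
    simp
  right_inv c := by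
    have hle : Multiset.replicate m o ≤ c.1.parts :=
      Multiset.le_count_iff_replicate_le.1 c.2
    ext1
    ext1
    simp [tsub_add_cancel_of_le hle]

theorem partition_occurrences (n o : ℕ) (hn : 0 < n) (ho : 0 < o) (hon : o ≤ n) :
    ∑ c : Nat.Partition n, c.parts.count o =
      ∑ m ∈ Finset.Icc 1 (n / o), Fintype.card (Nat.Partition (n - m * o)) := by
  have key : ∀ c : Nat.Partition n, c.parts.count o ≤ n / o := by
    intro c
    have hle : Multiset.replicate (c.parts.count o) o ≤ c.parts :=
      (Multiset.le_count_iff_replicate_le (a:=o) (s:=c.parts)).1 le_rfl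
    have hs : (Multiset.replicate (c.parts.count o) o).sum +
        (c.parts - Multiset.replicate (c.parts.count o) o).sum = n := by
      rw [← Multiset.sum_add, add_tsub_cancel_of_le hle, c.parts_sum]
    rw [Multiset.sum_replicate, smul_eq_mul] at hs
    rw [Nat.le_div_iff_mul_le ho]
    omega
  have lhs : ∀ c : Nat.Partition n,
      c.parts.count o = ∑ m ∈ Finset.Icc 1 (n / o), if m ≤ c.parts.count o then 1 else 0 := by
    intro c
    rw [← Finset.card_filter]
    have : Finset.filter (fun m => m ≤ c.parts.count o) (Finset.Icc 1 (n / o)) =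
        Finset.Icc 1 (c.parts.count o) := by
      ext m
      simp only [Finset.mem_filter, Finset.mem_Icc]
      have := key c
      omega
    rw [this]
    simp [Nat.card_Icc]
  calc ∑ c : Nat.Partition n, c.parts.count o
      = ∑ c : Nat.Partition n, ∑ m ∈ Finset.Icc 1 (n / o),
          if m ≤ c.parts.count o then 1 else 0 := by
        exact Finset.sum_congr rfl fun c _ => lhs c
    _ = ∑ m ∈ Finset.Icc 1 (n / o), ∑ c : Nat.Partition n,
          if m ≤ c.parts.count o then 1 else 0 := Finset.sum_comm
    _ = ∑ m ∈ Finset.Icc 1 (n / o), Fintype.card (Nat.Partition (n - m * o)) := by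
        refine Finset.sum_congr rfl fun m hm => ?_
        rw [← Finset.card_filter]
        have hm' := Finset.mem_Icc.1 hm
        have hmo : m * o ≤ n := by
          have := Nat.div_mul_le_self n o
          calc m * o ≤ (n / o) * o := Nat.mul_le_mul_right o hm'.2
            _ ≤ n := this
        rw [Fintype.card_congr (partAddEquiv n m o ho hmo), Fintype.card_subtype]
end

section
/- Let s : ℕ → ℚ with s 0 = 0 and define t by t_0 = 1, t_n = (1/n)·Σ_{k=0}^{n−1} s_{n−k} t_k. If additionally u satisfies u_0 = 1 and for all n ≥ 1, u_n = Σ_{r=1}^{n} Σ_{λ ∈ X_r(n)} Π_m s_{h_m}^{ρ_m}/(h_m^{ρ_m} ρ_m!), then u = t; i.e., the explicit partition-sum formula satisfies the recurrence n·u_n = Σ_{k=0}^{n−1} s_{n−k} u_k. -/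
open Finset

private def pfac (s : ℕ → ℚ) (M : Multiset ℕ) (h : ℕ) : ℚ :=
  s h ^ M.count h / ((h : ℚ) ^ M.count h * (M.count h).factorial)

private lemma pfac_of_not_mem (s : ℕ → ℚ) (M : Multiset ℕ) {h : ℕ} (hh : h ∉ M) :
    pfac s M h = 1 := by
  simp [pfac, Multiset.count_eq_zero_of_notMem hh]

private def wt (s : ℕ → ℚ) (M : Multiset ℕ) : ℚ := ∏ h ∈ M.toFinset, pfac s M h

private lemma wt_eq_prod (s : ℕ → ℚ) (M : Multiset ℕ) {S : Finset ℕ} (hS : M.toFinset ⊆ S) :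
    wt s M = ∏ h ∈ S, pfac s M h := by
  unfold wt
  exact Finset.prod_subset hS fun x _ hx => pfac_of_not_mem s M (by simpa using hx)

private lemma wt_cons (s : ℕ → ℚ) (M : Multiset ℕ) {j : ℕ} (hj : j ≠ 0) :
    ((j : ℚ) * ((j ::ₘ M).count j)) * wt s (j ::ₘ M) = s j * wt s M := by
  classical
  set S := insert j M.toFinset with hSdef
  have h1 : (j ::ₘ M).toFinset ⊆ S := by
    rw [Multiset.toFinset_cons]
  have h2 : M.toFinset ⊆ S := Finset.subset_insert _ _
  rw [wt_eq_prod s _ h1, wt_eq_prod s _ h2]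
  have hjS : j ∈ S := Finset.mem_insert_self _ _
  rw [Finset.prod_eq_mul_prod_sdiff_singleton_of_mem hjS (pfac s (j ::ₘ M)),
      Finset.prod_eq_mul_prod_sdiff_singleton_of_mem hjS (pfac s M)]
  have hrest : ∏ h ∈ S \ {j}, pfac s (j ::ₘ M) h = ∏ h ∈ S \ {j}, pfac s M h := by
    refine Finset.prod_congr rfl fun h hh => ?_
    have hne : h ≠ j := by
      rcases Finset.mem_sdiff.mp hh with ⟨_, h2'⟩
      simpa using h2'
    simp [pfac, Multiset.count_cons_of_ne hne]
  rw [hrest]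
  have hcount : (j ::ₘ M).count j = M.count j + 1 := Multiset.count_cons_self j M
  set c := M.count j with hc
  have hj' : (j : ℚ) ≠ 0 := Nat.cast_ne_zero.mpr hj
  have hf1 : ((c.factorial : ℚ)) ≠ 0 := Nat.cast_ne_zero.mpr c.factorial_ne_zero
  have hscalar : (j : ℚ) * ((c + 1 : ℕ) : ℚ) *
      (s j ^ (c + 1) / ((j : ℚ) ^ (c + 1) * (((c + 1).factorial : ℕ) : ℚ))) =
      s j * (s j ^ c / ((j : ℚ) ^ c * ((c.factorial : ℕ) : ℚ))) := by
    rw [pow_succ, pow_succ, Nat.factorial_succ]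
    push_cast
    field_simp
  simp only [pfac, hcount]
  calc (j : ℚ) * ((c + 1 : ℕ) : ℚ) *
      ((s j ^ (c + 1) / ((j : ℚ) ^ (c + 1) * (((c + 1).factorial : ℕ) : ℚ))) *
        ∏ h ∈ S \ {j}, pfac s M h)
      = ((j : ℚ) * ((c + 1 : ℕ) : ℚ) *
        (s j ^ (c + 1) / ((j : ℚ) ^ (c + 1) * (((c + 1).factorial : ℕ) : ℚ)))) *
        ∏ h ∈ S \ {j}, pfac s M h := by ring
    _ = (s j * (s j ^ c / ((j : ℚ) ^ c * ((c.factorial : ℕ) : ℚ)))) *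
        ∏ h ∈ S \ {j}, pfac s M h := by rw [hscalar]
    _ = s j * ((s j ^ c / ((j : ℚ) ^ c * ((c.factorial : ℕ) : ℚ))) *
        ∏ h ∈ S \ {j}, pfac s M h) := by ring

private lemma toFinset_sum_eq (M : Multiset ℕ) :
    ∑ j ∈ M.toFinset, (j : ℚ) * (M.count j : ℚ) = (M.sum : ℚ) := by
  have h : ((M.sum : ℕ) : ℚ) = ∑ j ∈ M.toFinset, ((M.count j • j : ℕ) : ℚ) := by
    rw [← Nat.cast_sum]
    exact congrArg _ (Finset.sum_multiset_count M)
  rw [h]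
  refine Finset.sum_congr rfl fun j _ => ?_
  push_cast [smul_eq_mul]
  ring

private def padd {n : ℕ} (j : ℕ) (hj1 : 1 ≤ j) (hjn : j ≤ n) (μ : Nat.Partition (n - j)) :
    Nat.Partition n where
  parts := j ::ₘ μ.parts
  parts_pos := by
    intro i hi
    rcases Multiset.mem_cons.mp hi with h | h
    · omega
    · exact μ.parts_pos h
  parts_sum := by
    rw [Multiset.sum_cons, μ.parts_sum]
    omega

private def perase {n : ℕ} (lam : Nat.Partition n) (j : ℕ) (hj : j ∈ lam.parts) :
    Nat.Partition (n - j) where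
  parts := lam.parts.erase j
  parts_pos := by
    intro i hi
    exact lam.parts_pos (Multiset.mem_of_mem_erase hi)
  parts_sum := by
    have h := Multiset.cons_erase hj
    have h2 : (j ::ₘ lam.parts.erase j).sum = n := by rw [h, lam.parts_sum]
    rw [Multiset.sum_cons] at h2
    omega

private lemma key_rec_s15 (s : ℕ → ℚ) (n : ℕ) :
    (n : ℚ) * ∑ lam : Nat.Partition n, wt s lam.parts =
      ∑ j ∈ Finset.Icc 1 n, s j * ∑ μ : Nat.Partition (n - j), wt s μ.parts := by
  classical
  have lhs_eq : (n : ℚ) * ∑ lam : Nat.Partition n, wt s lam.parts =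
      ∑ lam : Nat.Partition n, ∑ j ∈ lam.parts.toFinset,
        ((j : ℚ) * (lam.parts.count j : ℚ)) * wt s lam.parts := by
    rw [Finset.mul_sum]
    refine Finset.sum_congr rfl fun lam _ => ?_
    rw [← Finset.sum_mul, toFinset_sum_eq, lam.parts_sum]
  rw [lhs_eq]
  have rhs_eq : ∑ j ∈ Finset.Icc 1 n, s j * ∑ μ : Nat.Partition (n - j), wt s μ.parts =
      ∑ p ∈ (Finset.Icc 1 n).sigma
        (fun j => (Finset.univ : Finset (Nat.Partition (n - j)))),
        s p.1 * wt s p.2.parts := by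
    rw [Finset.sum_sigma]
    exact Finset.sum_congr rfl fun j _ => Finset.mul_sum _ _ _
  rw [rhs_eq]
  have lhs_eq2 : ∑ lam : Nat.Partition n, ∑ j ∈ lam.parts.toFinset,
        ((j : ℚ) * (lam.parts.count j : ℚ)) * wt s lam.parts =
      ∑ q ∈ (Finset.univ : Finset (Nat.Partition n)).sigma (fun lam => lam.parts.toFinset),
        ((q.2 : ℚ) * (q.1.parts.count q.2 : ℚ)) * wt s q.1.parts := by
    rw [Finset.sum_sigma]
  rw [lhs_eq2]
  refine Finset.sum_bij'
    (i := fun q hq => (⟨q.2,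
      perase q.1 q.2 (Multiset.mem_toFinset.mp (Finset.mem_sigma.mp hq).2)⟩ :
      Σ j : ℕ, Nat.Partition (n - j)))
    (j := fun p hp =>
      (⟨padd p.1 (Finset.mem_Icc.mp (Finset.mem_sigma.mp hp).1).1
        (Finset.mem_Icc.mp (Finset.mem_sigma.mp hp).1).2 p.2, p.1⟩ :
        Σ lam : Nat.Partition n, ℕ))
    ?_ ?_ ?_ ?_ ?_
  · rintro ⟨lam, j⟩ hq
    have hjp : j ∈ lam.parts := Multiset.mem_toFinset.mp (Finset.mem_sigma.mp hq).2
    refine Finset.mem_sigma.mpr ⟨Finset.mem_Icc.mpr ⟨lam.parts_pos hjp, ?_⟩, Finset.mem_univ _⟩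
    calc j ≤ lam.parts.sum := Multiset.le_sum_of_mem hjp
    _ = n := lam.parts_sum
  · rintro ⟨j, μ⟩ hp
    refine Finset.mem_sigma.mpr ⟨Finset.mem_univ _, ?_⟩
    simp [padd]
  · rintro ⟨lam, j⟩ hq
    have hjp : j ∈ lam.parts := Multiset.mem_toFinset.mp (Finset.mem_sigma.mp hq).2
    exact Sigma.ext (Nat.Partition.ext (Multiset.cons_erase hjp)) (by simp)
  · rintro ⟨j, μ⟩ hp
    exact Sigma.ext rfl
      (heq_of_eq (Nat.Partition.ext (Multiset.erase_cons_head j μ.parts)))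
  · rintro ⟨lam, j⟩ hq
    have hjp : j ∈ lam.parts := Multiset.mem_toFinset.mp (Finset.mem_sigma.mp hq).2
    have hj0 : j ≠ 0 := (lam.parts_pos hjp).ne'
    have h := wt_cons s (lam.parts.erase j) hj0
    rw [Multiset.cons_erase hjp] at h
    simpa [perase] using h

theorem partition_formula_satisfies_recurrence (s t u : ℕ → ℚ)
    (hs0 : s 0 = 0)
    (ht0 : t 0 = 1)
    (htrec : ∀ n : ℕ, 1 ≤ n → t n = (1 / (n : ℚ)) * ∑ k ∈ Finset.range n, s (n - k) * t k)
    (hu0 : u 0 = 1)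
    (hu : ∀ n : ℕ, 1 ≤ n → u n =
      ∑ r ∈ Finset.Icc 1 n,
        ∑ lam ∈ (Finset.univ : Finset (Nat.Partition n)).filter (fun c => c.parts.card = r),
          ∏ h ∈ lam.parts.toFinset,
            s h ^ lam.parts.count h /
              ((h : ℚ) ^ lam.parts.count h * (lam.parts.count h).factorial)) :
    u = t ∧ ∀ n : ℕ, 1 ≤ n →
      (n : ℚ) * u n = ∑ k ∈ Finset.range n, s (n - k) * u k := by
  classical
  have huF : ∀ n : ℕ, u n = ∑ lam : Nat.Partition n, wt s lam.parts := by
    intro n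
    rcases Nat.eq_zero_or_pos n with h0 | hpos
    · subst h0
      rw [hu0, Fintype.sum_unique]
      simp [wt]
    · rw [hu n hpos]
      have hmaps : ∀ lam ∈ (Finset.univ : Finset (Nat.Partition n)),
          lam.parts.card ∈ Finset.Icc 1 n := by
        intro lam _
        refine Finset.mem_Icc.mpr ⟨?_, ?_⟩
        · rcases Nat.eq_zero_or_pos (Multiset.card lam.parts) with hc | hc
          · exfalso
            have hp0 : lam.parts = 0 := Multiset.card_eq_zero.mp hc
            have hs := lam.parts_sum
            rw [hp0] at hs
            simp at hs
            omega
          · exact hc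
        · have h1 : Multiset.card lam.parts • 1 ≤ lam.parts.sum :=
            Multiset.card_nsmul_le_sum fun x hx => lam.parts_pos hx
          rw [smul_eq_mul, mul_one, lam.parts_sum] at h1
          exact h1
      exact Finset.sum_fiberwise_of_maps_to hmaps (fun lam => wt s lam.parts)
  have hrecu : ∀ n : ℕ, 1 ≤ n →
      (n : ℚ) * u n = ∑ k ∈ Finset.range n, s (n - k) * u k := by
    intro n hn
    rw [huF n, key_rec_s15 s n]
    refine Finset.sum_nbij' (i := fun j => n - j) (j := fun k => n - k) ?_ ?_ ?_ ?_ ?_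
    · intro j hj
      rw [Finset.mem_Icc] at hj
      show n - j ∈ Finset.range n
      rw [Finset.mem_range]
      omega
    · intro k hk
      rw [Finset.mem_range] at hk
      show n - k ∈ Finset.Icc 1 n
      rw [Finset.mem_Icc]
      omega
    · intro j hj
      rw [Finset.mem_Icc] at hj
      exact Nat.sub_sub_self hj.2
    · intro k hk
      rw [Finset.mem_range] at hk
      exact Nat.sub_sub_self (le_of_lt hk)
    · intro j hj
      rw [Finset.mem_Icc] at hj
      have h1 : n - (n - j) = j := by omega
      rw [h1, huF (n - j)]
  have hut : u = t := by
    funext n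
    induction n using Nat.strong_induction_on with
    | _ n ih =>
      rcases Nat.eq_zero_or_pos n with h0 | hpos
      · rw [h0, hu0, ht0]
      · have hn' : (n : ℚ) ≠ 0 := Nat.cast_ne_zero.mpr (by omega)
        rw [htrec n hpos]
        have hsum : ∑ k ∈ Finset.range n, s (n - k) * t k
            = ∑ k ∈ Finset.range n, s (n - k) * u k := by
          refine Finset.sum_congr rfl fun k hk => ?_
          rw [ih k (Finset.mem_range.mp hk)]
        rw [hsum, ← hrecu n hpos]
        field_simp
  exact ⟨hut, hrecu⟩
end
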